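/- arXiv:math/0402389 — 8 statements merged into one kernel-verified Lean document; each statement's English description precedes it below -/
import Mathlib

section
/- In a cancellative Noetherian monoid, if two balanced elements δ and τ have a left-gcd δ ∧_L τ and a right-gcd δ ∧_R τ, then δ ∧_L τ = δ ∧_R τ, and this common element is itself balanced. -/
namespace Garside

variable {M : Type*}

/-- left-divisibility -/
def LDvd [Monoid M] (a b : M) : Prop := ∃ c, b = a * c

/-- right-divisibility -/
def RDvd [Monoid M] (a b : M) : Prop := ∃ c, b = c * a

/-- Noetherian: lengths of factorizations into non-identity factors are bounded. -/
def NoetherianM (M : Type*) [Monoid M] : Prop :=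
  ∀ g : M, ∃ N : ℕ, ∀ l : List M, l.prod = g → (∀ x ∈ l, x ≠ 1) → l.length ≤ N

/-- balanced element: left divisors = right divisors -/
def Balanced [Monoid M] (δ : M) : Prop := ∀ g : M, LDvd g δ ↔ RDvd g δ

/-- the set of (left-)divisors of a (balanced) element -/
def D [Monoid M] (δ : M) : Set M := {g | LDvd g δ}

/-- atom of a monoid -/
def IsAtomM [Monoid M] (h : M) : Prop := h ≠ 1 ∧ ∀ g k : M, h = g * k → g = 1 ∨ k = 1

/-- support of a balanced element: atoms dividing it -/
def suppM [Monoid M] (δ : M) : Set M := {s | IsAtomM s ∧ LDvd s δ}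

/-- A Garside monoid structure on a cancellative monoid. -/
structure GarsideMonoid (M : Type*) [CancelMonoid M] where
  noeth : NoetherianM M
  wedgeL : M → M → M
  wedgeL_dvd_left : ∀ a b, LDvd (wedgeL a b) a
  wedgeL_dvd_right : ∀ a b, LDvd (wedgeL a b) b
  le_wedgeL : ∀ a b c, LDvd c a → LDvd c b → LDvd c (wedgeL a b)
  veeL : M → M → M
  dvd_veeL_left : ∀ a b, LDvd a (veeL a b)
  dvd_veeL_right : ∀ a b, LDvd b (veeL a b)
  veeL_le : ∀ a b c, LDvd a c → LDvd b c → LDvd (veeL a b) c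
  wedgeR : M → M → M
  wedgeR_dvd_left : ∀ a b, RDvd (wedgeR a b) a
  wedgeR_dvd_right : ∀ a b, RDvd (wedgeR a b) b
  le_wedgeR : ∀ a b c, RDvd c a → RDvd c b → RDvd c (wedgeR a b)
  veeR : M → M → M
  dvd_veeR_left : ∀ a b, RDvd a (veeR a b)
  dvd_veeR_right : ∀ a b, RDvd b (veeR a b)
  veeR_le : ∀ a b c, RDvd a c → RDvd b c → RDvd (veeR a b) c
  Δ : M
  balanced : Balanced Δ
  finD : (D Δ).Finite
  gen : Submonoid.closure (D Δ) = ⊤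

variable [CancelMonoid M]

/-- head function (left) -/
def GarsideMonoid.αL (G : GarsideMonoid M) (w : M) : M := G.wedgeL w G.Δ

/-- head function (right) -/
def GarsideMonoid.αR (G : GarsideMonoid M) (w : M) : M := G.wedgeR w G.Δ

/-- Garside submonoid: a sublattice submonoid closed under the head maps. -/
def IsGarsideSubmonoid (G : GarsideMonoid M) (H : Submonoid M) : Prop :=
  (∀ a ∈ H, ∀ b ∈ H,
      G.wedgeL a b ∈ H ∧ G.veeL a b ∈ H ∧ G.wedgeR a b ∈ H ∧ G.veeR a b ∈ H) ∧
  (∀ h ∈ H, G.αL h ∈ H ∧ G.αR h ∈ H)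

/-- least upper bound of a set for left-divisibility -/
def IsLubL (S : Set M) (δ : M) : Prop :=
  (∀ x ∈ S, LDvd x δ) ∧ ∀ c, (∀ x ∈ S, LDvd x c) → LDvd δ c

/-- least upper bound of a set for right-divisibility -/
def IsLubR (S : Set M) (δ : M) : Prop :=
  (∀ x ∈ S, RDvd x δ) ∧ ∀ c, (∀ x ∈ S, RDvd x c) → RDvd δ c

/-! Balancedness makes each one-sided gcd a common divisor of `δ` and `τ` on the other side, so
`δ ∧_L τ = (δ ∧_R τ) · c` and `δ ∧_R τ = k · (δ ∧_L τ)`, whence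
`δ ∧_R τ = k · (δ ∧_R τ) · c`: every power of `k` left-divides `δ ∧_R τ`, Noetherianity forces
`k = 1`, and cancellation `c = 1`.
Once the two gcds agree, a divisor of it on either side divides `δ` and `τ` on that side, hence on the
other side by balancedness, hence divides the gcd on the other side. -/

section Monoid

variable {α : Type*} [Monoid α]

theorem LDvd.trans {a b c : α} (hab : LDvd a b) (hbc : LDvd b c) : LDvd a c := by
  obtain ⟨u, rfl⟩ := hab
  obtain ⟨v, rfl⟩ := hbc
  exact ⟨u * v, mul_assoc a u v⟩

theorem RDvd.trans {a b c : α} (hab : RDvd a b) (hbc : RDvd b c) : RDvd a c := by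
  obtain ⟨u, rfl⟩ := hab
  obtain ⟨v, rfl⟩ := hbc
  exact ⟨v * u, (mul_assoc v u a).symm⟩

theorem pow_ldvd_of_eq_mul_mul {a x y : α} (h : a = x * a * y) (n : ℕ) : LDvd (x ^ n) a := by
  induction n with
  | zero => exact ⟨a, by rw [pow_zero, one_mul]⟩
  | succ n ih =>
    obtain ⟨b, hb⟩ := ih
    exact ⟨b * y, by rw [h, hb, pow_succ', mul_assoc, mul_assoc, mul_assoc]⟩

/-- A nontrivial `x` with `x ^ (N + 1) ∣ a` gives a factorization of `a` into at least `N + 1`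
nontrivial factors. -/
theorem NoetherianM.eq_one_of_forall_pow_ldvd (hN : NoetherianM α) {x a : α}
    (h : ∀ n, LDvd (x ^ n) a) : x = 1 := by
  by_contra hx
  obtain ⟨N, hlen⟩ := hN a
  obtain ⟨b, hb⟩ := h (N + 1)
  have hx_mem : ∀ z ∈ List.replicate (N + 1) x, z ≠ 1 := fun z hz =>
    List.eq_of_mem_replicate hz ▸ hx
  rcases eq_or_ne b 1 with rfl | hb1
  · have := hlen (List.replicate (N + 1) x) (by rw [List.prod_replicate, hb, mul_one]) hx_mem
    simp at this
  · have := hlen (List.replicate (N + 1) x ++ [b])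
      (by rw [List.prod_append, List.prod_replicate, List.prod_singleton, hb])
      (by simpa [or_imp, forall_and] using ⟨hx, hb1⟩)
    simp at this

end Monoid

theorem NoetherianM.eq_one_of_eq_mul_mul (hN : NoetherianM M) {a x y : M}
    (h : a = x * a * y) : x = 1 ∧ y = 1 := by
  have hx : x = 1 := hN.eq_one_of_forall_pow_ldvd (pow_ldvd_of_eq_mul_mul h)
  rw [hx, one_mul] at h
  exact ⟨hx, left_eq_mul.mp h⟩

theorem gcd_of_balanced_eq_and_balanced {M : Type*} [CancelMonoid M] (hN : NoetherianM M)
    (δ τ dL dR : M) (hδ : Balanced δ) (hτ : Balanced τ)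
    (hdL : LDvd dL δ ∧ LDvd dL τ ∧ ∀ c, LDvd c δ → LDvd c τ → LDvd c dL)
    (hdR : RDvd dR δ ∧ RDvd dR τ ∧ ∀ c, RDvd c δ → RDvd c τ → RDvd c dR) :
    dL = dR ∧ Balanced dL := by
  obtain ⟨hLδ, hLτ, hLmax⟩ := hdL
  obtain ⟨hRδ, hRτ, hRmax⟩ := hdR
  obtain ⟨k, hk⟩ : RDvd dL dR := hRmax dL ((hδ dL).mp hLδ) ((hτ dL).mp hLτ)
  obtain ⟨c, hc⟩ : LDvd dR dL := hLmax dR ((hδ dR).mpr hRδ) ((hτ dR).mpr hRτ)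
  have hc1 : c = 1 := (hN.eq_one_of_eq_mul_mul (by rw [mul_assoc, ← hc, hk])).2
  have heq : dL = dR := by rw [hc, hc1, mul_one]
  subst heq
  refine ⟨rfl, fun g => ⟨fun hg => ?_, fun hg => ?_⟩⟩
  · exact hRmax g ((hδ g).mp (hg.trans hLδ)) ((hτ g).mp (hg.trans hLτ))
  · exact hLmax g ((hδ g).mpr (hg.trans hRδ)) ((hτ g).mpr (hg.trans hRτ))
end Garside
end

section
/- Let M be a cancellative Noetherian monoid and let δ be a balanced element of M. Then D(δ)·δ = δ·D(δ) as sets, where D(δ) is the common set of left- and right-divisors of δ. -/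
namespace Garside

variable {M : Type*}

variable [CancelMonoid M]

section Monoid

variable {α : Type*} [Monoid α] {δ : α}

theorem Balanced.right_mem_D (hδ : Balanced δ) {a b : α} (h : δ = a * b) : b ∈ D δ :=
  (hδ b).mpr ⟨a, h⟩

/-- If `δ = x * c = c * z`, then `δ * z = x * c * z = x * δ`. -/
theorem Balanced.exists_delta_mul_eq (hδ : Balanced δ) {x : α} (hx : x ∈ D δ) :
    ∃ z ∈ D δ, δ * z = x * δ := by
  obtain ⟨c, hxc⟩ := hx
  obtain ⟨z, hcz⟩ := (hδ c).mpr ⟨x, hxc⟩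
  refine ⟨z, hδ.right_mem_D hcz, ?_⟩
  calc δ * z = x * (c * z) := by rw [hxc, mul_assoc]
    _ = x * δ := by rw [← hcz]

/-- If `δ = w * z = x * w`, then `x * δ = x * w * z = δ * z`. -/
theorem Balanced.exists_mul_delta_eq (hδ : Balanced δ) {z : α} (hz : z ∈ D δ) :
    ∃ x ∈ D δ, x * δ = δ * z := by
  obtain ⟨w, hwz⟩ := (hδ z).mp hz
  obtain ⟨x, hxw⟩ := (hδ w).mp ⟨z, hwz⟩
  refine ⟨x, ⟨w, hxw⟩, ?_⟩
  calc x * δ = x * w * z := by rw [hwz, mul_assoc]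
    _ = δ * z := by rw [← hxw]

end Monoid

theorem D_mul_delta_eq_delta_mul_D_general {M : Type*} [CancelMonoid M]
    (δ : M) (hδ : Balanced δ) :
    (fun x => x * δ) '' D δ = (fun z => δ * z) '' D δ := by
  ext m
  constructor
  · rintro ⟨x, hx, rfl⟩
    exact hδ.exists_delta_mul_eq hx
  · rintro ⟨z, hz, rfl⟩
    exact hδ.exists_mul_delta_eq hz

theorem D_mul_delta_eq_delta_mul_D {M : Type*} [CancelMonoid M] (hN : NoetherianM M)
    (δ : M) (hδ : Balanced δ) :
    (fun x => x * δ) '' D δ = (fun z => δ * z) '' D δ :=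
  D_mul_delta_eq_delta_mul_D_general δ hδ
end Garside
end

section
/- Let G⁺ be a Garside monoid with Garside element Δ and let H⁺ be a Garside submonoid. Then H⁺ ∩ D(Δ) is a sublattice of G⁺ for both left- and right-divisibility, and its least upper bound for left-divisibility equals its least upper bound for right-divisibility. -/
namespace Garside

variable {M : Type*}

variable [CancelMonoid M]

lemma sandwich_eq {M : Type*} [CancelMonoid M] (hN : NoetherianM M)
    {g d c : M} (h : g = d * g * c) : d = 1 ∧ c = 1 := by
  classical
  have hpow : ∀ n : ℕ, g = d ^ n * g * c ^ n := by
    intro n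
    induction n with
    | zero => simp
    | succ n ih =>
      calc g = d * g * c := h
        _ = d * (d ^ n * g * c ^ n) * c := by rw [← ih]
        _ = d ^ (n + 1) * g * c ^ (n + 1) := by
            rw [pow_succ', pow_succ]
            simp [mul_assoc]
  have hd1 : d = 1 := by
    by_contra hd
    obtain ⟨N, hNb⟩ := hN g
    set n := N + 1 with hn
    set m := g * c ^ n with hm
    have hg : g = d ^ n * m := by rw [hm, ← mul_assoc, ← hpow n]
    by_cases hm1 : m = 1
    · have hprod : (List.replicate n d).prod = g := by
        rw [List.prod_replicate, hg, hm1, mul_one]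
      have hlen := hNb _ hprod (by
        intro x hx
        rw [List.eq_of_mem_replicate hx]; exact hd)
      simp [hn] at hlen
    · have hprod : (List.replicate n d ++ [m]).prod = g := by
        rw [List.prod_append, List.prod_replicate, List.prod_singleton, ← hg]
      have hlen := hNb _ hprod (by
        intro x hx
        rcases List.mem_append.1 hx with h1 | h1
        · rw [List.eq_of_mem_replicate h1]; exact hd
        · rw [List.mem_singleton.1 h1]; exact hm1)
      simp [hn] at hlen
  refine ⟨hd1, ?_⟩
  have h' : g * 1 = g * c := by
    rw [mul_one]
    conv_lhs => rw [h, hd1, one_mul]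
  exact (mul_left_cancel h').symm

theorem inter_minimal_sublattice_and_lub {M : Type*} [CancelMonoid M]
    (G : GarsideMonoid M) (H : Submonoid M) (hH : IsGarsideSubmonoid G H) :
    (∀ a ∈ (H : Set M) ∩ D G.Δ, ∀ b ∈ (H : Set M) ∩ D G.Δ,
        G.wedgeL a b ∈ (H : Set M) ∩ D G.Δ ∧ G.veeL a b ∈ (H : Set M) ∩ D G.Δ ∧
        G.wedgeR a b ∈ (H : Set M) ∩ D G.Δ ∧ G.veeR a b ∈ (H : Set M) ∩ D G.Δ) ∧
    (∃ δ : M, IsLubL ((H : Set M) ∩ D G.Δ) δ ∧ IsLubR ((H : Set M) ∩ D G.Δ) δ) := by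
  classical
  set S : Set M := (H : Set M) ∩ D G.Δ with hS
  have part1 : ∀ a ∈ S, ∀ b ∈ S,
      G.wedgeL a b ∈ S ∧ G.veeL a b ∈ S ∧ G.wedgeR a b ∈ S ∧ G.veeR a b ∈ S := by
    intro a ha b hb
    obtain ⟨haH, haD⟩ := ha
    obtain ⟨hbH, hbD⟩ := hb
    obtain ⟨h1, h2, h3, h4⟩ := hH.1 a haH b hbH
    have haR : RDvd a G.Δ := (G.balanced a).1 haD
    have hbR : RDvd b G.Δ := (G.balanced b).1 hbD
    refine ⟨⟨h1, ?_⟩, ⟨h2, ?_⟩, ⟨h3, ?_⟩, ⟨h4, ?_⟩⟩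
    · obtain ⟨u, hu⟩ := G.wedgeL_dvd_left a b
      obtain ⟨v, hv⟩ := haD
      exact ⟨u * v, by rw [← mul_assoc, ← hu]; exact hv⟩
    · exact G.veeL_le a b G.Δ haD hbD
    · obtain ⟨u, hu⟩ := G.wedgeR_dvd_left a b
      obtain ⟨v, hv⟩ := haR
      exact (G.balanced _).2 ⟨v * u, by rw [mul_assoc, ← hu]; exact hv⟩
    · exact (G.balanced _).2 (G.veeR_le a b G.Δ haR hbR)
  refine ⟨part1, ?_⟩
  have hone : (1 : M) ∈ S := ⟨H.one_mem, ⟨G.Δ, (one_mul _).symm⟩⟩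
  have hSfin : S.Finite := G.finD.subset Set.inter_subset_right
  -- fold for left-divisibility
  have foldL : ∀ t : Finset M, (↑t : Set M) ⊆ S → ∃ d, d ∈ S ∧
      (∀ x ∈ t, LDvd x d) ∧ ∀ c, (∀ x ∈ t, LDvd x c) → LDvd d c := by
    intro t
    induction t using Finset.induction_on with
    | empty =>
      intro _
      exact ⟨1, hone, by simp, fun c _ => ⟨c, (one_mul c).symm⟩⟩
    | @insert a t hat ih =>
      intro hsub
      have haS : a ∈ S := hsub (by simp)
      obtain ⟨d, hdS, hub, hlub⟩ := ih (fun x hx => hsub (by simp [hx]))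
      refine ⟨G.veeL a d, (part1 a haS d hdS).2.1, ?_, ?_⟩
      · intro x hx
        rcases Finset.mem_insert.1 hx with rfl | hx
        · exact G.dvd_veeL_left _ _
        · obtain ⟨u, hu⟩ := hub x hx
          obtain ⟨v, hv⟩ := G.dvd_veeL_right a d
          exact ⟨u * v, by rw [hv, hu, mul_assoc]⟩
      · intro c hc
        exact G.veeL_le a d c (hc a (Finset.mem_insert_self a t))
          (hlub c (fun x hx => hc x (Finset.mem_insert_of_mem hx)))
  have foldR : ∀ t : Finset M, (↑t : Set M) ⊆ S → ∃ d, d ∈ S ∧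
      (∀ x ∈ t, RDvd x d) ∧ ∀ c, (∀ x ∈ t, RDvd x c) → RDvd d c := by
    intro t
    induction t using Finset.induction_on with
    | empty =>
      intro _
      exact ⟨1, hone, by simp, fun c _ => ⟨c, (mul_one c).symm⟩⟩
    | @insert a t hat ih =>
      intro hsub
      have haS : a ∈ S := hsub (by simp)
      have haR : RDvd a G.Δ := (G.balanced a).1 haS.2
      obtain ⟨d, hdS, hub, hlub⟩ := ih (fun x hx => hsub (by simp [hx]))
      have hdR : RDvd d G.Δ := (G.balanced d).1 hdS.2
      refine ⟨G.veeR a d, (part1 a haS d hdS).2.2.2, ?_, ?_⟩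
      · intro x hx
        rcases Finset.mem_insert.1 hx with rfl | hx
        · exact G.dvd_veeR_left _ _
        · obtain ⟨u, hu⟩ := hub x hx
          obtain ⟨v, hv⟩ := G.dvd_veeR_right a d
          exact ⟨v * u, by rw [hv, hu, ← mul_assoc]⟩
      · intro c hc
        exact G.veeR_le a d c (hc a (Finset.mem_insert_self a t))
          (hlub c (fun x hx => hc x (Finset.mem_insert_of_mem hx)))
  obtain ⟨δL, hδLS, hLub, hLlub⟩ := foldL hSfin.toFinset (by simp)
  obtain ⟨δR, hδRS, hRub, hRlub⟩ := foldR hSfin.toFinset (by simp)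
  have hmem : ∀ x, x ∈ S → x ∈ hSfin.toFinset := fun x hx => hSfin.mem_toFinset.2 hx
  -- δR left-divides δL and δL right-divides δR
  obtain ⟨c, hc⟩ := hLub δR (hmem _ hδRS)
  obtain ⟨d, hd⟩ := hRub δL (hmem _ hδLS)
  have hgdg : δL = d * δL * c := by
    conv_lhs => rw [hc, hd]
  obtain ⟨hd1, hc1⟩ := sandwich_eq G.noeth hgdg
  have heq : δL = δR := by rw [hc, hc1, mul_one]
  refine ⟨δL, ⟨fun x hx => hLub x (hmem x hx), ?_⟩,
    ⟨fun x hx => heq ▸ hRub x (hmem x hx), ?_⟩⟩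
  · intro cc hcc
    exact hLlub cc (fun x hx => hcc x (hSfin.mem_toFinset.1 hx))
  · intro cc hcc
    rw [heq]
    exact hRlub cc (fun x hx => hcc x (hSfin.mem_toFinset.1 hx))
end Garside
end

section
/- Let G be a Garside group with Garside monoid G⁺ and let H be a Garside subgroup of G with H⁺ = H ∩ G⁺. If h ∈ H has left normal form h = a⁻¹·b in G (with a, b ∈ G⁺ and a ∧_L b = 1), then a and b lie in H⁺, and a⁻¹·b is also the left normal form of h in H. -/
namespace Garside

variable {G : Type*} [Group G]

/-- left-divisibility relative to a submonoid P of a group -/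
def PLDvd (P : Submonoid G) (a b : G) : Prop := ∃ c ∈ P, b = a * c

/-- right-divisibility relative to a submonoid P of a group -/
def PRDvd (P : Submonoid G) (a b : G) : Prop := ∃ c ∈ P, b = c * a

/-- A Garside group structure: a group together with a Garside monoid of positive
elements, of which it is the group of fractions. -/
structure GarsideGroup (G : Type*) [Group G] where
  P : Submonoid G
  noeth : ∀ g ∈ P, ∃ N : ℕ, ∀ l : List G,
      (∀ x ∈ l, x ∈ P ∧ x ≠ 1) → l.prod = g → l.length ≤ N
  wedgeL : G → G → G
  wedgeL_mem : ∀ a ∈ P, ∀ b ∈ P, wedgeL a b ∈ P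
  wedgeL_dvd_left : ∀ a ∈ P, ∀ b ∈ P, PLDvd P (wedgeL a b) a
  wedgeL_dvd_right : ∀ a ∈ P, ∀ b ∈ P, PLDvd P (wedgeL a b) b
  le_wedgeL : ∀ a ∈ P, ∀ b ∈ P, ∀ c ∈ P, PLDvd P c a → PLDvd P c b → PLDvd P c (wedgeL a b)
  veeL : G → G → G
  veeL_mem : ∀ a ∈ P, ∀ b ∈ P, veeL a b ∈ P
  dvd_veeL_left : ∀ a ∈ P, ∀ b ∈ P, PLDvd P a (veeL a b)
  dvd_veeL_right : ∀ a ∈ P, ∀ b ∈ P, PLDvd P b (veeL a b)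
  veeL_le : ∀ a ∈ P, ∀ b ∈ P, ∀ c ∈ P, PLDvd P a c → PLDvd P b c → PLDvd P (veeL a b) c
  wedgeR : G → G → G
  wedgeR_mem : ∀ a ∈ P, ∀ b ∈ P, wedgeR a b ∈ P
  wedgeR_dvd_left : ∀ a ∈ P, ∀ b ∈ P, PRDvd P (wedgeR a b) a
  wedgeR_dvd_right : ∀ a ∈ P, ∀ b ∈ P, PRDvd P (wedgeR a b) b
  le_wedgeR : ∀ a ∈ P, ∀ b ∈ P, ∀ c ∈ P, PRDvd P c a → PRDvd P c b → PRDvd P c (wedgeR a b)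
  veeR : G → G → G
  veeR_mem : ∀ a ∈ P, ∀ b ∈ P, veeR a b ∈ P
  dvd_veeR_left : ∀ a ∈ P, ∀ b ∈ P, PRDvd P a (veeR a b)
  dvd_veeR_right : ∀ a ∈ P, ∀ b ∈ P, PRDvd P b (veeR a b)
  veeR_le : ∀ a ∈ P, ∀ b ∈ P, ∀ c ∈ P, PRDvd P a c → PRDvd P b c → PRDvd P (veeR a b) c
  Δ : G
  Δ_mem : Δ ∈ P
  balanced : ∀ g ∈ P, (PLDvd P g Δ ↔ PRDvd P g Δ)
  finD : {g | g ∈ P ∧ PLDvd P g Δ}.Finite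
  genP : Submonoid.closure {g | g ∈ P ∧ PLDvd P g Δ} = P
  fractions : ∀ g : G, ∃ a ∈ P, ∃ b ∈ P, g = a⁻¹ * b
  normal_form : ∀ g : G, ∃! p : G × G, p.1 ∈ P ∧ p.2 ∈ P ∧ g = p.1⁻¹ * p.2 ∧ wedgeL p.1 p.2 = 1

/-- set of minimals (divisors of the Garside element) -/
def DG (𝒢 : GarsideGroup G) : Set G := {g | g ∈ 𝒢.P ∧ PLDvd 𝒢.P g 𝒢.Δ}

/-- Garside subgroup: H ∩ G⁺ is a Garside submonoid and generates H. -/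
def IsGarsideSubgroup (𝒢 : GarsideGroup G) (H : Subgroup G) : Prop :=
  (∀ a, a ∈ H → a ∈ 𝒢.P → ∀ b, b ∈ H → b ∈ 𝒢.P →
      𝒢.wedgeL a b ∈ H ∧ 𝒢.veeL a b ∈ H ∧ 𝒢.wedgeR a b ∈ H ∧ 𝒢.veeR a b ∈ H) ∧
  (∀ h, h ∈ H → h ∈ 𝒢.P → 𝒢.wedgeL h 𝒢.Δ ∈ H ∧ 𝒢.wedgeR h 𝒢.Δ ∈ H) ∧
  Subgroup.closure ((H : Set G) ∩ (𝒢.P : Set G)) = H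

/-- atom of the positive monoid -/
def IsAtomP (𝒢 : GarsideGroup G) (s : G) : Prop :=
  s ∈ 𝒢.P ∧ s ≠ 1 ∧ ∀ g ∈ 𝒢.P, ∀ k ∈ 𝒢.P, s = g * k → g = 1 ∨ k = 1

/-- support: atoms dividing δ -/
def suppP (𝒢 : GarsideGroup G) (δ : G) : Set G := {s | IsAtomP 𝒢 s ∧ PLDvd 𝒢.P s δ}

/-- the subgroup generated by the support of δ -/
def Gδ (𝒢 : GarsideGroup G) (δ : G) : Subgroup G := Subgroup.closure (suppP 𝒢 δ)

/-- balanced element of the positive monoid -/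
def BalancedP (𝒢 : GarsideGroup G) (δ : G) : Prop :=
  ∀ g ∈ 𝒢.P, (PLDvd 𝒢.P g δ ↔ PRDvd 𝒢.P g δ)

/-- standard parabolic subgroup condition -/
def IsStdParabolic (𝒢 : GarsideGroup G) (δ : G) : Prop :=
  δ ∈ DG 𝒢 ∧ BalancedP 𝒢 δ ∧
    {g | g ∈ 𝒢.P ∧ PLDvd 𝒢.P g δ} =
      DG 𝒢 ∩ ((Gδ 𝒢 δ : Set G) ∩ (𝒢.P : Set G))

/-!
Every `h ∈ H` is a fraction `p⁻¹ * q` of positive elements of `H`, because `H⁺` has common right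
multiples and generates `H`. Cancelling the left gcd `z = p ∧_L q` gives a fraction with trivial
gcd, which by uniqueness is the normal form: `p = z * a` and `q = z * b`. Since `H⁺` is closed under
`∧_L`, both `a = z⁻¹ * p` and `b = z⁻¹ * q` lie in `H`.
-/

end Garside

theorem Subgroup.exists_eq_inv_mul_of_mem_closure {G : Type*} [Group G] {M : Submonoid G}
    (hM : ∀ p ∈ M, ∀ q ∈ M, ∃ u ∈ M, ∃ v ∈ M, u * p = v * q) {x : G}
    (hx : x ∈ Subgroup.closure (M : Set G)) : ∃ p ∈ M, ∃ q ∈ M, x = p⁻¹ * q := by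
  induction hx using Subgroup.closure_induction with
  | mem x hx => exact ⟨1, M.one_mem, x, hx, by simp⟩
  | one => exact ⟨1, M.one_mem, 1, M.one_mem, by simp⟩
  | mul x y _ _ hx hy =>
    obtain ⟨p₁, hp₁, q₁, hq₁, rfl⟩ := hx
    obtain ⟨p₂, hp₂, q₂, hq₂, rfl⟩ := hy
    obtain ⟨u, hu, v, hv, huv⟩ := hM q₁ hq₁ p₂ hp₂
    have hq₁p₂ : q₁ * p₂⁻¹ = u⁻¹ * v := by
      rw [eq_inv_mul_iff_mul_eq, ← mul_assoc, huv, mul_inv_cancel_right]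
    refine ⟨u * p₁, M.mul_mem hu hp₁, v * q₂, M.mul_mem hv hq₂, ?_⟩
    calc p₁⁻¹ * q₁ * (p₂⁻¹ * q₂) = p₁⁻¹ * (q₁ * p₂⁻¹) * q₂ := by group
      _ = (u * p₁)⁻¹ * (v * q₂) := by rw [hq₁p₂]; group
  | inv x _ hx =>
    obtain ⟨p, hp, q, hq, rfl⟩ := hx
    exact ⟨q, hq, p, hp, by group⟩

namespace Garside

variable {G : Type*} [Group G]

namespace GarsideGroup

variable (𝒢 : GarsideGroup G)

theorem eq_one_of_mul_eq_one {c e : G} (hc : c ∈ 𝒢.P) (he : e ∈ 𝒢.P) (hce : c * e = 1) :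
    c = 1 := by
  by_contra hc1
  have he1 : e ≠ 1 := by
    rintro rfl
    exact hc1 (by simpa using hce)
  obtain ⟨N, hN⟩ := 𝒢.noeth 1 𝒢.P.one_mem
  -- `(c * e) ^ (N + 1) = 1` is a factorisation of `1` into `2 * (N + 1)` nontrivial positive factors
  set l : List G := (List.replicate (N + 1) [c, e]).flatten
  have hl : ∀ x ∈ l, x ∈ 𝒢.P ∧ x ≠ 1 := by
    intro x hx
    obtain rfl | rfl : x = c ∨ x = e := by simpa [l] using hx
    · exact ⟨hc, hc1⟩
    · exact ⟨he, he1⟩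
  have hlen : l.length = 2 * (N + 1) := by simp [l, mul_comm]
  have := hN l hl (by simp [l, List.prod_flatten, hce])
  omega

theorem eq_one_of_pldvd_one {c : G} (hc : c ∈ 𝒢.P) (hdvd : PLDvd 𝒢.P c 1) : c = 1 := by
  obtain ⟨e, he, heq⟩ := hdvd
  exact 𝒢.eq_one_of_mul_eq_one hc he heq.symm

theorem wedgeL_eq_one_of_eq_wedgeL_mul {p q p' q' : G} (hp : p ∈ 𝒢.P) (hq : q ∈ 𝒢.P) (hp' : p' ∈ 𝒢.P)
    (hq' : q' ∈ 𝒢.P) (hpp' : p = 𝒢.wedgeL p q * p') (hqq' : q = 𝒢.wedgeL p q * q') :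
    𝒢.wedgeL p' q' = 1 := by
  set z := 𝒢.wedgeL p q
  set w := 𝒢.wedgeL p' q'
  have hw : w ∈ 𝒢.P := 𝒢.wedgeL_mem p' hp' q' hq'
  have hzw_dvd {r r' : G} (hrr' : r = z * r') (hwr' : PLDvd 𝒢.P w r') : PLDvd 𝒢.P (z * w) r := by
    obtain ⟨e, he, rfl⟩ := hwr'
    exact ⟨e, he, by rw [hrr', mul_assoc]⟩
  obtain ⟨e, he, hz⟩ := 𝒢.le_wedgeL p hp q hq (z * w) (𝒢.P.mul_mem (𝒢.wedgeL_mem p hp q hq) hw)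
    (hzw_dvd hpp' (𝒢.wedgeL_dvd_left p' hp' q' hq'))
    (hzw_dvd hqq' (𝒢.wedgeL_dvd_right p' hp' q' hq'))
  refine 𝒢.eq_one_of_mul_eq_one hw he (mul_left_cancel (a := z) ?_)
  rw [mul_one, ← mul_assoc, ← hz]

theorem eq_wedgeL_mul_of_inv_mul_eq {p q a b : G} (hp : p ∈ 𝒢.P) (hq : q ∈ 𝒢.P) (ha : a ∈ 𝒢.P)
    (hb : b ∈ 𝒢.P) (hab : 𝒢.wedgeL a b = 1) (hpq : p⁻¹ * q = a⁻¹ * b) :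
    p = 𝒢.wedgeL p q * a ∧ q = 𝒢.wedgeL p q * b := by
  obtain ⟨p', hp', hpp'⟩ := 𝒢.wedgeL_dvd_left p hp q hq
  obtain ⟨q', hq', hqq'⟩ := 𝒢.wedgeL_dvd_right p hp q hq
  set z := 𝒢.wedgeL p q
  have hp'q' : p'⁻¹ * q' = p⁻¹ * q :=
    calc p'⁻¹ * q' = (z * p')⁻¹ * (z * q') := by group
      _ = p⁻¹ * q := by rw [← hpp', ← hqq']
  have hnf : (p', q') = (a, b) := (𝒢.normal_form (p⁻¹ * q)).unique
    ⟨hp', hq', hp'q'.symm, 𝒢.wedgeL_eq_one_of_eq_wedgeL_mul hp hq hp' hq' hpp' hqq'⟩ ⟨ha, hb, hpq, hab⟩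
  obtain ⟨rfl, rfl⟩ := Prod.ext_iff.mp hnf
  exact ⟨hpp', hqq'⟩

end GarsideGroup

namespace IsGarsideSubgroup

variable {𝒢 : GarsideGroup G} {H : Subgroup G}

theorem wedgeL_mem (hH : IsGarsideSubgroup 𝒢 H) {a b : G} (haH : a ∈ H) (ha : a ∈ 𝒢.P)
    (hbH : b ∈ H) (hb : b ∈ 𝒢.P) : 𝒢.wedgeL a b ∈ H :=
  (hH.1 a haH ha b hbH hb).1

theorem veeR_mem (hH : IsGarsideSubgroup 𝒢 H) {a b : G} (haH : a ∈ H) (ha : a ∈ 𝒢.P)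
    (hbH : b ∈ H) (hb : b ∈ 𝒢.P) : 𝒢.veeR a b ∈ H :=
  (hH.1 a haH ha b hbH hb).2.2.2

theorem exists_mul_eq_mul (hH : IsGarsideSubgroup 𝒢 H) :
    ∀ p ∈ 𝒢.P ⊓ H.toSubmonoid, ∀ q ∈ 𝒢.P ⊓ H.toSubmonoid,
      ∃ u ∈ 𝒢.P ⊓ H.toSubmonoid, ∃ v ∈ 𝒢.P ⊓ H.toSubmonoid, u * p = v * q := by
  rintro p ⟨hp, hpH⟩ q ⟨hq, hqH⟩
  have hm := hH.veeR_mem hpH hp hqH hq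
  obtain ⟨u, hu, hup⟩ := 𝒢.dvd_veeR_left p hp q hq
  obtain ⟨v, hv, hvq⟩ := 𝒢.dvd_veeR_right p hp q hq
  have huH : u ∈ H := eq_mul_inv_of_mul_eq hup.symm ▸ H.mul_mem hm (H.inv_mem hpH)
  have hvH : v ∈ H := eq_mul_inv_of_mul_eq hvq.symm ▸ H.mul_mem hm (H.inv_mem hqH)
  exact ⟨u, ⟨hu, huH⟩, v, ⟨hv, hvH⟩, hup.symm.trans hvq⟩

theorem exists_eq_inv_mul (hH : IsGarsideSubgroup 𝒢 H) {h : G} (hh : h ∈ H) :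
    ∃ p ∈ 𝒢.P ⊓ H.toSubmonoid, ∃ q ∈ 𝒢.P ⊓ H.toSubmonoid, h = p⁻¹ * q := by
  refine Subgroup.exists_eq_inv_mul_of_mem_closure hH.exists_mul_eq_mul ?_
  rwa [Submonoid.coe_inf, Set.inter_comm, Subgroup.coe_toSubmonoid, hH.2.2]

end IsGarsideSubgroup

theorem normal_form_in_subgroup {G : Type*} [Group G] (𝒢 : GarsideGroup G)
    (H : Subgroup G) (hH : IsGarsideSubgroup 𝒢 H)
    (h : G) (hh : h ∈ H) (a b : G) (ha : a ∈ 𝒢.P) (hb : b ∈ 𝒢.P)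
    (hgcd : 𝒢.wedgeL a b = 1) (hfrac : h = a⁻¹ * b) :
    a ∈ H ∧ b ∈ H ∧
    (∀ c, c ∈ 𝒢.P → c ∈ H →
      (∃ d, d ∈ 𝒢.P ∧ d ∈ H ∧ a = c * d) →
      (∃ d, d ∈ 𝒢.P ∧ d ∈ H ∧ b = c * d) → c = 1) := by
  obtain ⟨p, ⟨hp, hpH⟩, q, ⟨hq, hqH⟩, hpq⟩ := hH.exists_eq_inv_mul hh
  have hzH := hH.wedgeL_mem hpH hp hqH hq
  obtain ⟨hpa, hqb⟩ := 𝒢.eq_wedgeL_mul_of_inv_mul_eq hp hq ha hb hgcd (hpq.symm.trans hfrac)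
  refine ⟨?_, ?_, ?_⟩
  · exact eq_inv_mul_of_mul_eq hpa.symm ▸ H.mul_mem (H.inv_mem hzH) hpH
  · exact eq_inv_mul_of_mul_eq hqb.symm ▸ H.mul_mem (H.inv_mem hzH) hqH
  · rintro c hc - ⟨d₁, hd₁, -, hcd₁⟩ ⟨d₂, hd₂, -, hcd₂⟩
    refine 𝒢.eq_one_of_pldvd_one hc ?_
    rw [← hgcd]
    exact 𝒢.le_wedgeL a ha b hb c hc ⟨d₁, hd₁, hcd₁⟩ ⟨d₂, hd₂, hcd₂⟩
end Garside
end

section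
/- The intersection of two Garside subgroups H and K of a Garside group G is a Garside subgroup of G, and (H ∩ K) ∩ G⁺ = (H ∩ G⁺) ∩ (K ∩ G⁺). -/
namespace Garside

variable {G : Type*} [Group G]

/-- the positive monoid has no nontrivial units -/
lemma units_trivial (𝒢 : GarsideGroup G) {d e : G} (hd : d ∈ 𝒢.P) (he : e ∈ 𝒢.P)
    (hde : d * e = 1) : d = 1 := by
  by_contra hd1
  have he1 : e ≠ 1 := by
    rintro rfl
    simp at hde; exact hd1 hde
  obtain ⟨N, hN⟩ := 𝒢.noeth 1 (Submonoid.one_mem _)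
  have := hN (List.flatten (List.replicate (N + 1) [d, e])) ?_ ?_
  · simp at this; omega
  · intro x hx
    simp [List.mem_flatten, List.mem_replicate] at hx
    rcases hx with rfl | rfl
    exacts [⟨hd, hd1⟩, ⟨he, he1⟩]
  · rw [List.prod_flatten]
    simp [hde]

/-- every element of a Garside subgroup is a left fraction with terms in H ∩ P -/
lemma mem_frac (𝒢 : GarsideGroup G) (H : Subgroup G) (hH : IsGarsideSubgroup 𝒢 H) :
    ∀ h ∈ H, ∃ a, a ∈ H ∧ a ∈ 𝒢.P ∧ ∃ b, b ∈ H ∧ b ∈ 𝒢.P ∧ h = a⁻¹ * b := by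
  intro h hh
  rw [← hH.2.2] at hh
  induction hh using Subgroup.closure_induction with
  | mem x hx =>
      exact ⟨1, H.one_mem, Submonoid.one_mem _, x, hx.1, hx.2, by simp⟩
  | one => exact ⟨1, H.one_mem, Submonoid.one_mem _, 1, H.one_mem, Submonoid.one_mem _, by simp⟩
  | mul x y hx hy ihx ihy =>
      obtain ⟨a, haH, haP, b, hbH, hbP, rfl⟩ := ihx
      obtain ⟨c, hcH, hcP, d, hdH, hdP, rfl⟩ := ihy
      obtain ⟨p, hpP, hpv⟩ := 𝒢.dvd_veeR_left b hbP c hcP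
      obtain ⟨q, hqP, hqv⟩ := 𝒢.dvd_veeR_right b hbP c hcP
      have hvH : 𝒢.veeR b c ∈ H := (hH.1 b hbH hbP c hcH hcP).2.2.2
      have hpH : p ∈ H := by
        have : p = 𝒢.veeR b c * b⁻¹ := eq_mul_inv_iff_mul_eq.mpr hpv.symm
        rw [this]; exact H.mul_mem hvH (H.inv_mem hbH)
      have hqH : q ∈ H := by
        have : q = 𝒢.veeR b c * c⁻¹ := eq_mul_inv_iff_mul_eq.mpr hqv.symm
        rw [this]; exact H.mul_mem hvH (H.inv_mem hcH)
      refine ⟨p * a, H.mul_mem hpH haH, Submonoid.mul_mem _ hpP haP,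
        q * d, H.mul_mem hqH hdH, Submonoid.mul_mem _ hqP hdP, ?_⟩
      have hpc : p * b = q * c := by rw [← hpv, ← hqv]
      have hbc : b * c⁻¹ = p⁻¹ * q := by
        have h1 : p * (b * c⁻¹) = q := by
          rw [← mul_assoc, hpc]; group
        rw [← h1]; group
      rw [mul_inv_rev]
      calc a⁻¹ * b * (c⁻¹ * d) = a⁻¹ * (b * c⁻¹) * d := by group
        _ = a⁻¹ * (p⁻¹ * q) * d := by rw [hbc]
        _ = a⁻¹ * p⁻¹ * (q * d) := by group
  | inv x hx ihx =>
      obtain ⟨a, haH, haP, b, hbH, hbP, rfl⟩ := ihx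
      exact ⟨b, hbH, hbP, a, haH, haP, by group⟩

/-- the normal form of an element of a Garside subgroup has its terms in the subgroup -/
lemma nf_mem (𝒢 : GarsideGroup G) (H : Subgroup G) (hH : IsGarsideSubgroup 𝒢 H)
    {h : G} (hh : h ∈ H) {p : G × G} (hp : p.1 ∈ 𝒢.P ∧ p.2 ∈ 𝒢.P ∧ h = p.1⁻¹ * p.2 ∧
      𝒢.wedgeL p.1 p.2 = 1) : p.1 ∈ H ∧ p.2 ∈ H := by
  obtain ⟨a, haH, haP, b, hbH, hbP, rfl⟩ := mem_frac 𝒢 H hH h hh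
  have hwP : 𝒢.wedgeL a b ∈ 𝒢.P := 𝒢.wedgeL_mem a haP b hbP
  have hwH : 𝒢.wedgeL a b ∈ H := (hH.1 a haH haP b hbH hbP).1
  obtain ⟨a', ha'P, ha'⟩ := 𝒢.wedgeL_dvd_left a haP b hbP
  obtain ⟨b', hb'P, hb'⟩ := 𝒢.wedgeL_dvd_right a haP b hbP
  have ha'2 : a' = (𝒢.wedgeL a b)⁻¹ * a := eq_inv_mul_iff_mul_eq.mpr ha'.symm
  have hb'2 : b' = (𝒢.wedgeL a b)⁻¹ * b := eq_inv_mul_iff_mul_eq.mpr hb'.symm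
  have ha'H : a' ∈ H := by rw [ha'2]; exact H.mul_mem (H.inv_mem hwH) haH
  have hb'H : b' ∈ H := by rw [hb'2]; exact H.mul_mem (H.inv_mem hwH) hbH
  have hnf : a⁻¹ * b = a'⁻¹ * b' := by rw [ha'2, hb'2]; group
  have hwedge1 : 𝒢.wedgeL a' b' = 1 := by
    have huP : 𝒢.wedgeL a' b' ∈ 𝒢.P := 𝒢.wedgeL_mem a' ha'P b' hb'P
    obtain ⟨s, hsP, hsa⟩ := 𝒢.wedgeL_dvd_left a' ha'P b' hb'P
    obtain ⟨t, htP, htb⟩ := 𝒢.wedgeL_dvd_right a' ha'P b' hb'P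
    have hdvda : PLDvd 𝒢.P (𝒢.wedgeL a b * 𝒢.wedgeL a' b') a :=
      ⟨s, hsP, by rw [mul_assoc, ← hsa, ← ha']⟩
    have hdvdb : PLDvd 𝒢.P (𝒢.wedgeL a b * 𝒢.wedgeL a' b') b :=
      ⟨t, htP, by rw [mul_assoc, ← htb, ← hb']⟩
    obtain ⟨e, heP, hew⟩ := 𝒢.le_wedgeL a haP b hbP (𝒢.wedgeL a b * 𝒢.wedgeL a' b')
      (Submonoid.mul_mem _ hwP huP) hdvda hdvdb
    have hue : 𝒢.wedgeL a' b' * e = 1 :=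
      mul_left_cancel (a := 𝒢.wedgeL a b) (by rw [← mul_assoc, mul_one]; exact hew.symm)
    exact units_trivial 𝒢 huP heP hue
  obtain ⟨q, hq, huniq⟩ := 𝒢.normal_form (a⁻¹ * b)
  have h1 : p = q := huniq p hp
  have h2 : (a', b') = q := huniq (a', b') ⟨ha'P, hb'P, hnf, hwedge1⟩
  rw [h1, ← h2]
  exact ⟨ha'H, hb'H⟩

theorem inter_garside_subgroups {G : Type*} [Group G] (𝒢 : GarsideGroup G)
    (H K : Subgroup G) (hH : IsGarsideSubgroup 𝒢 H) (hK : IsGarsideSubgroup 𝒢 K) :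
    IsGarsideSubgroup 𝒢 (H ⊓ K) ∧
    ((H ⊓ K : Subgroup G) : Set G) ∩ (𝒢.P : Set G) =
      ((H : Set G) ∩ (𝒢.P : Set G)) ∩ ((K : Set G) ∩ (𝒢.P : Set G)) := by
  have hset : ((H ⊓ K : Subgroup G) : Set G) ∩ (𝒢.P : Set G) =
      ((H : Set G) ∩ (𝒢.P : Set G)) ∩ ((K : Set G) ∩ (𝒢.P : Set G)) := by
    ext x
    simp only [Set.mem_inter_iff, Subgroup.coe_inf, SetLike.mem_coe, Subgroup.mem_inf]
    tauto
  refine ⟨⟨?_, ?_, ?_⟩, hset⟩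
  · intro a haHK haP b hbHK hbP
    obtain ⟨haH, haK⟩ := Subgroup.mem_inf.mp haHK
    obtain ⟨hbH, hbK⟩ := Subgroup.mem_inf.mp hbHK
    obtain ⟨h1, h2, h3, h4⟩ := hH.1 a haH haP b hbH hbP
    obtain ⟨k1, k2, k3, k4⟩ := hK.1 a haK haP b hbK hbP
    exact ⟨Subgroup.mem_inf.mpr ⟨h1, k1⟩, Subgroup.mem_inf.mpr ⟨h2, k2⟩,
      Subgroup.mem_inf.mpr ⟨h3, k3⟩, Subgroup.mem_inf.mpr ⟨h4, k4⟩⟩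
  · intro h hhHK hhP
    obtain ⟨hhH, hhK⟩ := Subgroup.mem_inf.mp hhHK
    obtain ⟨h1, h2⟩ := hH.2.1 h hhH hhP
    obtain ⟨k1, k2⟩ := hK.2.1 h hhK hhP
    exact ⟨Subgroup.mem_inf.mpr ⟨h1, k1⟩, Subgroup.mem_inf.mpr ⟨h2, k2⟩⟩
  · apply le_antisymm
    · rw [Subgroup.closure_le]
      exact Set.inter_subset_left
    · intro g hg
      obtain ⟨hgH, hgK⟩ := Subgroup.mem_inf.mp hg
      obtain ⟨p, hp, _⟩ := 𝒢.normal_form g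
      obtain ⟨hp1H, hp2H⟩ := nf_mem 𝒢 H hH hgH hp
      obtain ⟨hp1K, hp2K⟩ := nf_mem 𝒢 K hK hgK hp
      have h1 : p.1 ∈ Subgroup.closure (((H ⊓ K : Subgroup G) : Set G) ∩ (𝒢.P : Set G)) :=
        Subgroup.subset_closure ⟨Subgroup.mem_inf.mpr ⟨hp1H, hp1K⟩, hp.1⟩
      have h2 : p.2 ∈ Subgroup.closure (((H ⊓ K : Subgroup G) : Set G) ∩ (𝒢.P : Set G)) :=
        Subgroup.subset_closure ⟨Subgroup.mem_inf.mpr ⟨hp2H, hp2K⟩, hp.2.1⟩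
      rw [hp.2.2.1]
      exact Subgroup.mul_mem _ (Subgroup.inv_mem _ h1) h2
end Garside
end

section
/- Let G⁺ be a Garside monoid with Garside element Δ, let δ ∈ D(Δ) be balanced, and suppose D(δ) = D(Δ) ∩ G⁺_δ, where G⁺_δ is the submonoid generated by supp(δ). Then G⁺_δ (the parabolic submonoid) is closed under left-divisibility and under right-divisibility: if g left-divides (or right-divides) h ∈ G⁺_δ in G⁺, then g ∈ G⁺_δ. -/
namespace Garside

variable {M : Type*}

variable [CancelMonoid M]

set_option linter.unusedSectionVars false

section Aux

variable {M : Type*} [CancelMonoid M]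

lemma units_trivial_s12 (hN : NoetherianM M) {a b : M} (h : a * b = 1) : a = 1 ∧ b = 1 := by
  by_cases hb : b = 1
  · subst hb; rw [mul_one] at h; exact ⟨h, rfl⟩
  · have ha : a ≠ 1 := by rintro rfl; rw [one_mul] at h; exact hb h
    exfalso
    obtain ⟨N, hNb⟩ := hN 1
    have key : ∀ n : ℕ, ((List.replicate n ([a, b] : List M)).flatten).prod = 1 := by
      intro n; induction n with
      | zero => simp
      | succ n ih => simp only [List.replicate_succ, List.flatten_cons, List.prod_append, ih,
          List.prod_cons, List.prod_nil, mul_one, h, one_mul]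
    have hmem : ∀ x ∈ (List.replicate (N+1) ([a,b] : List M)).flatten, x ≠ 1 := by
      intro x hx
      rw [List.mem_flatten] at hx
      obtain ⟨l, hl, hxl⟩ := hx
      rw [List.eq_of_mem_replicate hl] at hxl
      simp only [List.mem_cons, List.not_mem_nil, or_false] at hxl
      rcases hxl with rfl | rfl
      · exact ha
      · exact hb
    have hlen := hNb _ (key (N+1)) hmem
    simp [List.length_flatten] at hlen
    omega

lemma LDvd.trans_s12 {a b c : M} (h1 : LDvd a b) (h2 : LDvd b c) : LDvd a c := by
  obtain ⟨x, rfl⟩ := h1; obtain ⟨y, rfl⟩ := h2; exact ⟨x * y, by rw [mul_assoc]⟩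

lemma RDvd.trans_s12 {a b c : M} (h1 : RDvd a b) (h2 : RDvd b c) : RDvd a c := by
  obtain ⟨x, rfl⟩ := h1; obtain ⟨y, rfl⟩ := h2; exact ⟨y * x, by rw [mul_assoc]⟩

lemma LDvd.refl (a : M) : LDvd a a := ⟨1, (mul_one a).symm⟩

lemma one_LDvd (a : M) : LDvd 1 a := ⟨a, (one_mul a).symm⟩

lemma one_RDvd (a : M) : RDvd 1 a := ⟨a, (mul_one a).symm⟩

lemma LDvd_one_iff (hN : NoetherianM M) {a : M} (h : LDvd a 1) : a = 1 := by
  obtain ⟨c, hc⟩ := h; exact (units_trivial_s12 hN hc.symm).1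

lemma RDvd_one_iff (hN : NoetherianM M) {a : M} (h : RDvd a 1) : a = 1 := by
  obtain ⟨c, hc⟩ := h; exact (units_trivial_s12 hN hc.symm).2

lemma mul_LDvd_left {a b : M} : LDvd a (a * b) := ⟨b, rfl⟩

lemma mul_RDvd_right {a b : M} : RDvd b (a * b) := ⟨a, rfl⟩

/-- complement lemma for balanced elements, left version -/
lemma compl_balanced_L {δ a b : M} (hbal : Balanced δ) (h : LDvd (a * b) δ) : LDvd b δ := by
  obtain ⟨c, hc⟩ := h
  have hbc : RDvd (b * c) δ := ⟨a, by rw [hc, mul_assoc]⟩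
  exact LDvd.trans_s12 mul_LDvd_left ((hbal (b * c)).2 hbc)

/-- complement lemma for balanced elements, right version -/
lemma compl_balanced_R {δ a b : M} (hbal : Balanced δ) (h : RDvd (a * b) δ) : RDvd a δ := by
  obtain ⟨c, hc⟩ := h
  have hca : LDvd (c * a) δ := ⟨b, by rw [hc, mul_assoc]⟩
  exact RDvd.trans_s12 mul_RDvd_right ((hbal (c * a)).1 hca)

section WithG

variable (G : GarsideMonoid M) (δ : M) (hδD : δ ∈ D G.Δ) (hbal : Balanced δ)
  (hpar : D δ = D G.Δ ∩ (Submonoid.closure (suppM δ) : Set M))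

include hδD hbal hpar

/-- any element with a common divisor with Δ that divides an element of M_δ divides δ -/
lemma headL_aux : ∀ l : List M, (∀ x ∈ l, x ∈ suppM δ) → ∀ e : M,
    LDvd e l.prod → LDvd e G.Δ → LDvd e δ := by
  intro l
  induction l with
  | nil =>
    intro _ e he _
    rw [List.prod_nil] at he
    rw [LDvd_one_iff G.noeth he]
    exact one_LDvd δ
  | cons s t ih =>
    intro hmem e he heΔ
    rw [List.prod_cons] at he
    have hs : s ∈ suppM δ := hmem s (List.mem_cons_self)
    have hsδ : LDvd s δ := hs.2
    have hsΔ : LDvd s G.Δ := LDvd.trans_s12 hsδ hδD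
    have hfh : LDvd (G.veeL e s) (s * t.prod) := G.veeL_le e s _ he ⟨t.prod, rfl⟩
    have hfΔ : LDvd (G.veeL e s) G.Δ := G.veeL_le e s _ heΔ hsΔ
    obtain ⟨u, hu⟩ := G.dvd_veeL_right e s
    have huT : LDvd u t.prod := by
      obtain ⟨m, hm⟩ := hfh
      rw [hu, mul_assoc] at hm
      exact ⟨m, mul_left_cancel hm⟩
    have huΔ : LDvd u G.Δ := compl_balanced_L G.balanced
      (show LDvd (s * u) G.Δ by rw [← hu]; exact hfΔ)
    have huδ : LDvd u δ := ih (fun x hx => hmem x (List.mem_cons_of_mem s hx)) u huT huΔ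
    have huM : u ∈ Submonoid.closure (suppM δ) := by
      have : u ∈ D δ := huδ
      rw [hpar] at this
      exact this.2
    have hsM : s ∈ Submonoid.closure (suppM δ) := Submonoid.subset_closure hs
    have hfM : G.veeL e s ∈ Submonoid.closure (suppM δ) := by
      rw [hu]; exact mul_mem hsM huM
    have hfδ : LDvd (G.veeL e s) δ := by
      have : G.veeL e s ∈ D δ := by rw [hpar]; exact ⟨hfΔ, hfM⟩
      exact this
    exact LDvd.trans_s12 (G.dvd_veeL_left e s) hfδ

/-- removing a divisor-of-δ prefix keeps us in M_δ -/
lemma complC_L : ∀ l : List M, (∀ x ∈ l, x ∈ suppM δ) → ∀ d h₂ : M,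
    LDvd d δ → l.prod = d * h₂ → h₂ ∈ Submonoid.closure (suppM δ) := by
  intro l
  induction l with
  | nil =>
    intro _ d h₂ _ hprod
    rw [List.prod_nil] at hprod
    have := units_trivial_s12 G.noeth hprod.symm
    rw [this.2]
    exact one_mem _
  | cons s t ih =>
    intro hmem d h₂ hdδ hprod
    rw [List.prod_cons] at hprod
    have hs : s ∈ suppM δ := hmem s (List.mem_cons_self)
    have hsδ : LDvd s δ := hs.2
    have hvδ : LDvd (G.veeL d s) δ := G.veeL_le d s δ hdδ hsδ
    have hvh : LDvd (G.veeL d s) (s * t.prod) := G.veeL_le d s _ ⟨h₂, hprod⟩ ⟨t.prod, rfl⟩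
    obtain ⟨u, hu⟩ := G.dvd_veeL_right d s
    obtain ⟨e, he⟩ := G.dvd_veeL_left d s
    have huδ : LDvd u δ := compl_balanced_L hbal
      (show LDvd (s * u) δ by rw [← hu]; exact hvδ)
    have heδ : LDvd e δ := compl_balanced_L hbal
      (show LDvd (d * e) δ by rw [← he]; exact hvδ)
    obtain ⟨m, hm⟩ := hvh
    have huT : t.prod = u * m := by
      rw [hu, mul_assoc] at hm
      exact mul_left_cancel hm
    have hmM : m ∈ Submonoid.closure (suppM δ) :=
      ih (fun x hx => hmem x (List.mem_cons_of_mem s hx)) u m huδ huT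
    have hh₂ : h₂ = e * m := by
      have : d * h₂ = d * (e * m) := by
        rw [← hprod, hm, he, mul_assoc]
      exact mul_left_cancel this
    have heM : e ∈ Submonoid.closure (suppM δ) := by
      have : e ∈ D δ := heδ
      rw [hpar] at this
      exact this.2
    rw [hh₂]
    exact mul_mem heM hmM

omit hδD hbal hpar in
/-- find a nontrivial simple left-divisor -/
lemma atom_prefix : ∀ l : List M, (∀ x ∈ l, x ∈ D G.Δ) → ∀ g : M, l.prod = g → g ≠ 1 →
    ∃ a : M, a ≠ 1 ∧ a ∈ D G.Δ ∧ LDvd a g := by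
  intro l
  induction l with
  | nil => intro _ g hg hg1; rw [List.prod_nil] at hg; exact absurd hg.symm hg1
  | cons s t ih =>
    intro hmem g hg hg1
    rw [List.prod_cons] at hg
    by_cases hs1 : s = 1
    · exact ih (fun x hx => hmem x (List.mem_cons_of_mem s hx)) g (by rw [← hg, hs1, one_mul]) hg1
    · exact ⟨s, hs1, hmem s (List.mem_cons_self), ⟨t.prod, hg.symm⟩⟩

lemma mainL : ∀ N : ℕ, ∀ h : M,
    (∀ l : List M, l.prod = h → (∀ x ∈ l, x ≠ 1) → l.length ≤ N) →
    h ∈ Submonoid.closure (suppM δ) → ∀ g : M, LDvd g h → g ∈ Submonoid.closure (suppM δ) := by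
  intro N
  induction N with
  | zero =>
    intro h hbound hh g hg
    by_cases hg1 : g = 1
    · rw [hg1]; exact one_mem _
    · have hh1 : h ≠ 1 := by
        rintro rfl
        exact hg1 (LDvd_one_iff G.noeth hg)
      have := hbound [h] (by simp) (by simpa using hh1)
      simp at this
  | succ n ih =>
    intro h hbound hh g hg
    by_cases hg1 : g = 1
    · rw [hg1]; exact one_mem _
    · -- find a nontrivial simple prefix of g
      have hgtop : g ∈ Submonoid.closure (D G.Δ) := by rw [G.gen]; trivial
      obtain ⟨l₀, hl₀mem, hl₀prod⟩ := Submonoid.exists_list_of_mem_closure hgtop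
      obtain ⟨a, ha1, haD, hag⟩ := atom_prefix G l₀ hl₀mem g hl₀prod hg1
      set d := G.wedgeL g G.Δ with hd
      have had : LDvd a d := G.le_wedgeL g G.Δ a hag haD
      have hd1 : d ≠ 1 := by
        intro h1
        exact ha1 (LDvd_one_iff G.noeth (h1 ▸ had))
      obtain ⟨g₁, hg₁⟩ := G.wedgeL_dvd_left g G.Δ
      have hdh : LDvd d h := LDvd.trans_s12 ⟨g₁, hg₁⟩ hg
      obtain ⟨c, hc⟩ := hg
      -- h ∈ M_δ: list representation
      obtain ⟨l, hlmem, hlprod⟩ := Submonoid.exists_list_of_mem_closure hh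
      have hdδ : LDvd d δ := headL_aux G δ hδD hbal hpar l hlmem d
        (by rw [hlprod]; exact hdh) (G.wedgeL_dvd_right g G.Δ)
      have hdM : d ∈ Submonoid.closure (suppM δ) := by
        have : d ∈ D δ := hdδ
        rw [hpar] at this
        exact this.2
      have hh2 : h = d * (g₁ * c) := by rw [hc, hg₁, mul_assoc]
      have hh₂M : g₁ * c ∈ Submonoid.closure (suppM δ) :=
        complC_L G δ hδD hbal hpar l hlmem d (g₁ * c) hdδ (by rw [hlprod]; exact hh2)
      have hbound₂ : ∀ l' : List M, l'.prod = g₁ * c → (∀ x ∈ l', x ≠ 1) → l'.length ≤ n := by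
        intro l' hl'
        intro hl'1
        have : (d :: l').prod = h := by rw [List.prod_cons, hl', hh2]
        have hlen := hbound (d :: l') this (by
          intro x hx
          rcases List.mem_cons.mp hx with rfl | hx
          · exact hd1
          · exact hl'1 x hx)
        simpa using hlen
      have hg₁M : g₁ ∈ Submonoid.closure (suppM δ) :=
        ih (g₁ * c) hbound₂ hh₂M g₁ ⟨c, rfl⟩
      rw [hg₁]
      exact mul_mem hdM hg₁M

-- Right-hand versions

lemma headR_aux : ∀ l : List M, (∀ x ∈ l, x ∈ suppM δ) → ∀ e : M,
    RDvd e l.reverse.prod → RDvd e G.Δ → RDvd e δ := by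
  intro l
  induction l with
  | nil =>
    intro _ e he _
    simp only [List.reverse_nil, List.prod_nil] at he
    rw [RDvd_one_iff G.noeth he]
    exact one_RDvd δ
  | cons s t ih =>
    intro hmem e he heΔ
    rw [List.reverse_cons, List.prod_append, List.prod_cons, List.prod_nil, mul_one] at he
    have hs : s ∈ suppM δ := hmem s (List.mem_cons_self)
    have hsδ : RDvd s δ := (hbal s).1 hs.2
    have hδΔ : RDvd δ G.Δ := (G.balanced δ).1 hδD
    have hsΔ : RDvd s G.Δ := RDvd.trans_s12 hsδ hδΔ
    have hfh : RDvd (G.veeR e s) (t.reverse.prod * s) := G.veeR_le e s _ he ⟨t.reverse.prod, rfl⟩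
    have hfΔ : RDvd (G.veeR e s) G.Δ := G.veeR_le e s _ heΔ hsΔ
    obtain ⟨u, hu⟩ := G.dvd_veeR_right e s
    have huT : RDvd u t.reverse.prod := by
      obtain ⟨m, hm⟩ := hfh
      rw [hu, ← mul_assoc] at hm
      exact ⟨m, mul_right_cancel hm⟩
    have huΔ : RDvd u G.Δ := by
      have h1 : RDvd (u * s) G.Δ := by rw [← hu]; exact hfΔ
      exact compl_balanced_R G.balanced h1
    have huδ : RDvd u δ := ih (fun x hx => hmem x (List.mem_cons_of_mem s hx)) u huT huΔ
    have huM : u ∈ Submonoid.closure (suppM δ) := by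
      have : u ∈ D δ := (hbal u).2 huδ
      rw [hpar] at this
      exact this.2
    have hsM : s ∈ Submonoid.closure (suppM δ) := Submonoid.subset_closure hs
    have hfM : G.veeR e s ∈ Submonoid.closure (suppM δ) := by
      rw [hu]; exact mul_mem huM hsM
    have hfδ : RDvd (G.veeR e s) δ := by
      have : G.veeR e s ∈ D δ := by
        rw [hpar]
        exact ⟨(G.balanced _).2 hfΔ, hfM⟩
      exact (hbal _).1 this
    exact RDvd.trans_s12 (G.dvd_veeR_left e s) hfδ

lemma complC_R : ∀ l : List M, (∀ x ∈ l, x ∈ suppM δ) → ∀ d h₂ : M,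
    RDvd d δ → l.reverse.prod = h₂ * d → h₂ ∈ Submonoid.closure (suppM δ) := by
  intro l
  induction l with
  | nil =>
    intro _ d h₂ _ hprod
    simp only [List.reverse_nil, List.prod_nil] at hprod
    have := units_trivial_s12 G.noeth hprod.symm
    rw [this.1]
    exact one_mem _
  | cons s t ih =>
    intro hmem d h₂ hdδ hprod
    rw [List.reverse_cons, List.prod_append, List.prod_cons, List.prod_nil, mul_one] at hprod
    have hs : s ∈ suppM δ := hmem s (List.mem_cons_self)
    have hsδ : RDvd s δ := (hbal s).1 hs.2
    have hvδ : RDvd (G.veeR d s) δ := G.veeR_le d s δ hdδ hsδ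
    have hvh : RDvd (G.veeR d s) (t.reverse.prod * s) :=
      G.veeR_le d s _ ⟨h₂, hprod⟩ ⟨t.reverse.prod, rfl⟩
    obtain ⟨u, hu⟩ := G.dvd_veeR_right d s
    obtain ⟨e, he⟩ := G.dvd_veeR_left d s
    have huδ : RDvd u δ := compl_balanced_R hbal
      (show RDvd (u * s) δ by rw [← hu]; exact hvδ)
    have heδ : RDvd e δ := compl_balanced_R hbal
      (show RDvd (e * d) δ by rw [← he]; exact hvδ)
    obtain ⟨m, hm⟩ := hvh
    have huT : t.reverse.prod = m * u := by
      rw [hu, ← mul_assoc] at hm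
      exact mul_right_cancel hm
    have hmM : m ∈ Submonoid.closure (suppM δ) :=
      ih (fun x hx => hmem x (List.mem_cons_of_mem s hx)) u m huδ huT
    have hh₂ : h₂ = m * e := by
      have : h₂ * d = (m * e) * d := by
        rw [← hprod, hm, he, mul_assoc]
      exact mul_right_cancel this
    have heM : e ∈ Submonoid.closure (suppM δ) := by
      have : e ∈ D δ := (hbal e).2 heδ
      rw [hpar] at this
      exact this.2
    rw [hh₂]
    exact mul_mem hmM heM

omit hδD hbal hpar in
lemma atom_suffix : ∀ l : List M, (∀ x ∈ l, x ∈ D G.Δ) → ∀ g : M, l.reverse.prod = g → g ≠ 1 →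
    ∃ a : M, a ≠ 1 ∧ a ∈ D G.Δ ∧ RDvd a g := by
  intro l
  induction l with
  | nil => intro _ g hg hg1; rw [List.reverse_nil, List.prod_nil] at hg; exact absurd hg.symm hg1
  | cons s t ih =>
    intro hmem g hg hg1
    rw [List.reverse_cons, List.prod_append, List.prod_cons, List.prod_nil, mul_one] at hg
    by_cases hs1 : s = 1
    · exact ih (fun x hx => hmem x (List.mem_cons_of_mem s hx)) g
        (by rw [← hg, hs1, mul_one]) hg1
    · exact ⟨s, hs1, hmem s (List.mem_cons_self), ⟨t.reverse.prod, hg.symm⟩⟩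

lemma mainR : ∀ N : ℕ, ∀ h : M,
    (∀ l : List M, l.prod = h → (∀ x ∈ l, x ≠ 1) → l.length ≤ N) →
    h ∈ Submonoid.closure (suppM δ) → ∀ g : M, RDvd g h → g ∈ Submonoid.closure (suppM δ) := by
  intro N
  induction N with
  | zero =>
    intro h hbound hh g hg
    by_cases hg1 : g = 1
    · rw [hg1]; exact one_mem _
    · have hh1 : h ≠ 1 := by
        rintro rfl
        exact hg1 (RDvd_one_iff G.noeth hg)
      have := hbound [h] (by simp) (by simpa using hh1)
      simp at this
  | succ n ih =>
    intro h hbound hh g hg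
    by_cases hg1 : g = 1
    · rw [hg1]; exact one_mem _
    · have hgtop : g ∈ Submonoid.closure (D G.Δ) := by rw [G.gen]; trivial
      obtain ⟨l₀, hl₀mem, hl₀prod⟩ := Submonoid.exists_list_of_mem_closure hgtop
      obtain ⟨a, ha1, haD, hag⟩ := atom_suffix G l₀.reverse
        (fun x hx => hl₀mem x (List.mem_reverse.mp hx)) g
        (by rw [List.reverse_reverse]; exact hl₀prod) hg1
      have haΔ : RDvd a G.Δ := (G.balanced a).1 haD
      set d := G.wedgeR g G.Δ with hd
      have had : RDvd a d := G.le_wedgeR g G.Δ a hag haΔ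
      have hd1 : d ≠ 1 := by
        intro h1
        exact ha1 (RDvd_one_iff G.noeth (h1 ▸ had))
      obtain ⟨g₁, hg₁⟩ := G.wedgeR_dvd_left g G.Δ
      have hdh : RDvd d h := RDvd.trans_s12 ⟨g₁, hg₁⟩ hg
      obtain ⟨c, hc⟩ := hg
      obtain ⟨l, hlmem, hlprod⟩ := Submonoid.exists_list_of_mem_closure hh
      have hdδ : RDvd d δ := headR_aux G δ hδD hbal hpar l.reverse
        (fun x hx => hlmem x (List.mem_reverse.mp hx)) d
        (by rw [List.reverse_reverse, hlprod]; exact hdh) (G.wedgeR_dvd_right g G.Δ)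
      have hdM : d ∈ Submonoid.closure (suppM δ) := by
        have : d ∈ D δ := (hbal d).2 hdδ
        rw [hpar] at this
        exact this.2
      have hh2 : h = (c * g₁) * d := by rw [hc, hg₁, mul_assoc]
      have hh₂M : c * g₁ ∈ Submonoid.closure (suppM δ) :=
        complC_R G δ hδD hbal hpar l.reverse
          (fun x hx => hlmem x (List.mem_reverse.mp hx)) d (c * g₁)
          hdδ (by rw [List.reverse_reverse, hlprod]; exact hh2)
      have hbound₂ : ∀ l' : List M, l'.prod = c * g₁ → (∀ x ∈ l', x ≠ 1) → l'.length ≤ n := by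
        intro l' hl' hl'1
        have hp : (l' ++ [d]).prod = h := by
          rw [List.prod_append, List.prod_cons, List.prod_nil, mul_one, hl', hh2]
        have hlen := hbound (l' ++ [d]) hp (by
          intro x hx
          rcases List.mem_append.mp hx with hx | hx
          · exact hl'1 x hx
          · simp only [List.mem_cons, List.not_mem_nil, or_false] at hx
            rw [hx]; exact hd1)
        simpa using hlen
      have hg₁M : g₁ ∈ Submonoid.closure (suppM δ) :=
        ih (c * g₁) hbound₂ hh₂M g₁ ⟨c, rfl⟩
      rw [hg₁]
      exact mul_mem hg₁M hdM

end WithG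

end Aux

theorem parabolic_submonoid_closed_under_divisibility {M : Type*} [CancelMonoid M]
    (G : GarsideMonoid M) (δ : M) (hδD : δ ∈ D G.Δ) (hbal : Balanced δ)
    (hpar : D δ = D G.Δ ∩ (Submonoid.closure (suppM δ) : Set M)) :
    ∀ g h : M, h ∈ Submonoid.closure (suppM δ) → (LDvd g h ∨ RDvd g h) →
      g ∈ Submonoid.closure (suppM δ) := by
  intro g h hh hdvd
  obtain ⟨N, hN⟩ := G.noeth h
  rcases hdvd with hL | hR
  · exact mainL G δ hδD hbal hpar N h hN hh g hL
  · exact mainR G δ hδD hbal hpar N h hN hh g hR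

end Garside
end

section
/- Let G be a Garside group with Garside element Δ and let G_δ, G_τ be two standard parabolic subgroups, associated to balanced elements δ, τ ∈ D(Δ). Then G_δ ∩ G_τ = G_{δ∧τ}, the standard parabolic subgroup associated to the balanced element δ ∧ τ (the common left/right gcd of δ and τ); in particular the intersection of two standard parabolic subgroups is a standard parabolic subgroup. -/
namespace Garside

variable {G : Type*} [Group G]

section Basics
variable (𝒢 : GarsideGroup G)

lemma gj_one_ldvd {a : G} (ha : a ∈ 𝒢.P) : PLDvd 𝒢.P 1 a := ⟨a, ha, (one_mul a).symm⟩

lemma gj_ldvd_refl (a : G) : PLDvd 𝒢.P a a := ⟨1, one_mem _, (mul_one a).symm⟩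

lemma gj_ldvd_mul {a c : G} (hc : c ∈ 𝒢.P) : PLDvd 𝒢.P a (a * c) := ⟨c, hc, rfl⟩

lemma gj_ldvd_trans {a b c : G} (h1 : PLDvd 𝒢.P a b) (h2 : PLDvd 𝒢.P b c) :
    PLDvd 𝒢.P a c := by
  obtain ⟨u, hu, rfl⟩ := h1
  obtain ⟨v, hv, rfl⟩ := h2
  exact ⟨u * v, mul_mem hu hv, mul_assoc _ _ _⟩

lemma gj_rdvd_trans {a b c : G} (h1 : PRDvd 𝒢.P a b) (h2 : PRDvd 𝒢.P b c) :
    PRDvd 𝒢.P a c := by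
  obtain ⟨u, hu, rfl⟩ := h1
  obtain ⟨v, hv, rfl⟩ := h2
  exact ⟨v * u, mul_mem hv hu, (mul_assoc _ _ _).symm⟩

lemma gj_ldvd_mul_left {a b : G} (c : G) (h : PLDvd 𝒢.P a b) : PLDvd 𝒢.P (c * a) (c * b) := by
  obtain ⟨u, hu, rfl⟩ := h
  exact ⟨u, hu, (mul_assoc _ _ _).symm⟩

lemma gj_ldvd_cancel_left {a b c : G} (h : PLDvd 𝒢.P (c * a) (c * b)) : PLDvd 𝒢.P a b := by
  obtain ⟨u, hu, he⟩ := h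
  refine ⟨u, hu, ?_⟩
  rw [mul_assoc] at he
  exact mul_left_cancel he

lemma gj_quot_mem_left {a b : G} (h : PLDvd 𝒢.P a b) : a⁻¹ * b ∈ 𝒢.P := by
  obtain ⟨u, hu, rfl⟩ := h
  simpa using hu

lemma gj_sandwich {x u v : G} (hx : x ∈ 𝒢.P) (hu : u ∈ 𝒢.P) (hv : v ∈ 𝒢.P)
    (h : x = u * x * v) : u = 1 ∧ v = 1 := by
  have key : ∀ n : ℕ, x = u ^ n * (x * v ^ n) := by
    intro n
    induction n with
    | zero => simp
    | succ n ih =>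
      calc x = u * x * v := h
        _ = u * (u ^ n * (x * v ^ n)) * v := by rw [← ih]
        _ = u ^ (n+1) * (x * v ^ (n+1)) := by
            rw [pow_succ' u n, pow_succ v n]
            simp only [mul_assoc]
  have hu1 : u = 1 := by
    by_contra hne
    obtain ⟨N, hN⟩ := 𝒢.noeth x hx
    have hyP : x * v ^ (N + 1) ∈ 𝒢.P := mul_mem hx (pow_mem hv _)
    by_cases hy1 : x * v ^ (N + 1) = 1
    · have hlen := hN (List.replicate (N + 1) u)
        (fun z hz => by rw [List.eq_of_mem_replicate hz]; exact ⟨hu, hne⟩)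
        (by rw [List.prod_replicate]; conv_rhs => rw [key (N+1), hy1, mul_one])
      simp at hlen
    · have hlen := hN (List.replicate (N + 1) u ++ [x * v ^ (N + 1)])
        (fun z hz => by
          rcases List.mem_append.mp hz with hz | hz
          · rw [List.eq_of_mem_replicate hz]; exact ⟨hu, hne⟩
          · simp only [List.mem_singleton] at hz; subst hz; exact ⟨hyP, hy1⟩)
        (by rw [List.prod_append, List.prod_replicate, List.prod_singleton]
            exact (key (N+1)).symm)
      simp only [List.length_append, List.length_replicate, List.length_singleton] at hlen
      omega
  refine ⟨hu1, ?_⟩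
  rw [hu1, one_mul] at h
  have h2 : x * 1 = x * v := by rw [mul_one, ← h]
  exact (mul_left_cancel h2).symm

lemma gj_mul_eq_one {u v : G} (hu : u ∈ 𝒢.P) (hv : v ∈ 𝒢.P) (h : u * v = 1) :
    u = 1 ∧ v = 1 :=
  gj_sandwich 𝒢 (one_mem _) hu hv (by rw [mul_one, h])

lemma gj_ldvd_one {a : G} (ha : a ∈ 𝒢.P) (h : PLDvd 𝒢.P a 1) : a = 1 := by
  obtain ⟨c, hc, he⟩ := h
  exact (gj_mul_eq_one 𝒢 ha hc he.symm).1

lemma gj_ldvd_antisymm {a b : G} (ha : a ∈ 𝒢.P) (hb : b ∈ 𝒢.P)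
    (h1 : PLDvd 𝒢.P a b) (h2 : PLDvd 𝒢.P b a) : a = b := by
  obtain ⟨u, hu, rfl⟩ := h1
  obtain ⟨v, hv, he⟩ := h2
  have h3 : a * (u * v) = a * 1 := by rw [mul_one, ← mul_assoc, ← he]
  have h4 := (gj_mul_eq_one 𝒢 hu hv (mul_left_cancel h3)).1
  rw [h4, mul_one]

lemma gj_noeth_induction (Q : G → Prop)
    (step : ∀ g ∈ 𝒢.P,
      (∀ h' ∈ 𝒢.P, (∃ a ∈ 𝒢.P, a ≠ 1 ∧ (g = a * h' ∨ g = h' * a)) → Q h') → Q g) :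
    ∀ g ∈ 𝒢.P, Q g := by
  have aux : ∀ n : ℕ, ∀ g ∈ 𝒢.P,
      (∀ l : List G, (∀ x ∈ l, x ∈ 𝒢.P ∧ x ≠ 1) → l.prod = g → l.length ≤ n) → Q g := by
    intro n
    induction n with
    | zero =>
      intro g hg hb
      apply step g hg
      rintro h' hh' ⟨a, ha, hane, hc⟩
      exfalso
      rcases eq_or_ne h' 1 with rfl | h1
      · have hga : g = a := by rcases hc with h | h <;> simpa using h
        have := hb [a] (fun z hz => by
          simp only [List.mem_singleton] at hz; subst hz; exact ⟨ha, hane⟩)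
          (by simp [hga])
        simp at this
      · rcases hc with rfl | rfl
        · have := hb [a, h'] (fun z hz => by
            rcases List.mem_cons.mp hz with rfl | hz
            · exact ⟨ha, hane⟩
            · simp only [List.mem_singleton] at hz; subst hz; exact ⟨hh', h1⟩)
            (by simp [mul_assoc])
          simp at this
        · have := hb [h', a] (fun z hz => by
            rcases List.mem_cons.mp hz with rfl | hz
            · exact ⟨hh', h1⟩
            · simp only [List.mem_singleton] at hz; subst hz; exact ⟨ha, hane⟩)
            (by simp [mul_assoc])
          simp at this
    | succ n ih =>
      intro g hg hb
      apply step g hg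
      rintro h' hh' ⟨a, ha, hane, hc⟩
      apply ih h' hh'
      intro l hl hp
      rcases hc with rfl | rfl
      · have hlen := hb (a :: l) (fun z hz => by
          rcases List.mem_cons.mp hz with rfl | hz
          · exact ⟨ha, hane⟩
          · exact hl z hz)
          (by rw [List.prod_cons, hp])
        simp only [List.length_cons] at hlen
        omega
      · have hlen := hb (l ++ [a]) (fun z hz => by
          rcases List.mem_append.mp hz with hz | hz
          · exact hl z hz
          · simp only [List.mem_singleton] at hz; subst hz; exact ⟨ha, hane⟩)
          (by rw [List.prod_append, List.prod_singleton, hp])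
        simp only [List.length_append, List.length_singleton] at hlen
        omega
  intro g hg
  obtain ⟨N, hN⟩ := 𝒢.noeth g hg
  exact aux N g hg hN

lemma gj_exists_atom : ∀ g ∈ 𝒢.P, g ≠ 1 → ∃ a, IsAtomP 𝒢 a ∧ PLDvd 𝒢.P a g := by
  apply gj_noeth_induction 𝒢 (fun g => g ≠ 1 → ∃ a, IsAtomP 𝒢 a ∧ PLDvd 𝒢.P a g)
  intro g hg IH hne
  by_cases hat : IsAtomP 𝒢 g
  · exact ⟨g, hat, gj_ldvd_refl 𝒢 g⟩
  · have hC : ¬ ∀ u ∈ 𝒢.P, ∀ k ∈ 𝒢.P, g = u * k → u = 1 ∨ k = 1 := fun hC => hat ⟨hg, hne, hC⟩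
    push_neg at hC
    obtain ⟨u, hu, k, hk, heq, hu1, hk1⟩ := hC
    obtain ⟨a, haat, hadvd⟩ := IH u hu ⟨k, hk, hk1, Or.inr heq⟩ hu1
    exact ⟨a, haat, gj_ldvd_trans 𝒢 hadvd ⟨k, hk, heq⟩⟩

lemma gj_atom_mem_DG : ∀ s, IsAtomP 𝒢 s → s ∈ DG 𝒢 := by
  have key : ∀ s ∈ Submonoid.closure {g | g ∈ 𝒢.P ∧ PLDvd 𝒢.P g 𝒢.Δ},
      IsAtomP 𝒢 s → s ∈ DG 𝒢 := by
    intro s hsP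
    induction hsP using Submonoid.closure_induction with
    | mem x hx => exact fun _ => hx
    | one => exact fun h => absurd rfl h.2.1
    | mul x y hx hy ihx ihy =>
      intro hat
      have hxP : x ∈ 𝒢.P := by rw [← 𝒢.genP]; exact hx
      have hyP : y ∈ 𝒢.P := by rw [← 𝒢.genP]; exact hy
      rcases hat.2.2 x hxP y hyP rfl with h1 | h1
      · rw [h1, one_mul] at hat ⊢; exact ihy hat
      · rw [h1, mul_one] at hat ⊢; exact ihx hat
  intro s hs
  exact key s (by rw [𝒢.genP]; exact hs.1) hs

end Basics
section Block2
variable (𝒢 : GarsideGroup G)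

lemma gj_coprime {x y w x' y' : G} (hx : x ∈ 𝒢.P) (hy : y ∈ 𝒢.P)
    (hw : w = 𝒢.wedgeL x y) (hx' : x = w * x') (hy' : y = w * y')
    (hx'P : x' ∈ 𝒢.P) (hy'P : y' ∈ 𝒢.P) : 𝒢.wedgeL x' y' = 1 := by
  set z := 𝒢.wedgeL x' y' with hz
  have hzP := 𝒢.wedgeL_mem x' hx'P y' hy'P
  have hwP : w ∈ 𝒢.P := hw ▸ 𝒢.wedgeL_mem x hx y hy
  have hz1 : PLDvd 𝒢.P (w * z) x := by
    rw [hx']; exact gj_ldvd_mul_left 𝒢 w (𝒢.wedgeL_dvd_left x' hx'P y' hy'P)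
  have hz2 : PLDvd 𝒢.P (w * z) y := by
    rw [hy']; exact gj_ldvd_mul_left 𝒢 w (𝒢.wedgeL_dvd_right x' hx'P y' hy'P)
  have h3 : PLDvd 𝒢.P (w * z) w :=
    hw ▸ 𝒢.le_wedgeL x hx y hy (w * z) (mul_mem hwP hzP) hz1 hz2
  obtain ⟨q, hq, he⟩ := h3
  have h4 : w * (z * q) = w * 1 := by rw [mul_one, ← mul_assoc, ← he]
  exact (gj_mul_eq_one 𝒢 hzP hq (mul_left_cancel h4)).1

lemma gj_cycle_right {δ d : G} (hbal : BalancedP 𝒢 δ) (hd : d ∈ 𝒢.P)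
    (hdvd : PLDvd 𝒢.P d δ) : ∃ d', (d' ∈ 𝒢.P ∧ PLDvd 𝒢.P d' δ) ∧ d * δ = δ * d' := by
  obtain ⟨t, ht, hte⟩ := hdvd
  have htL : PLDvd 𝒢.P t δ := (hbal t ht).mpr ⟨d, hd, hte⟩
  obtain ⟨s, hs, hse⟩ := htL
  refine ⟨s, ⟨hs, (hbal s hs).mpr ⟨t, ht, hse⟩⟩, ?_⟩
  conv_lhs => rw [hse]
  conv_rhs => rw [hte]
  rw [mul_assoc]

lemma gj_cycle_left {δ d : G} (hδP : δ ∈ 𝒢.P) (hbal : BalancedP 𝒢 δ)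
    (hδΔ : PLDvd 𝒢.P δ 𝒢.Δ) (hd : d ∈ 𝒢.P) (hdvd : PLDvd 𝒢.P d δ) :
    ∃ d₀, (d₀ ∈ 𝒢.P ∧ PLDvd 𝒢.P d₀ δ) ∧ δ * d = d₀ * δ := by
  set S : Set G := {g | g ∈ 𝒢.P ∧ PLDvd 𝒢.P g δ} with hS
  have hfin : S.Finite := 𝒢.finD.subset (fun g hg => ⟨hg.1, gj_ldvd_trans 𝒢 hg.2 hδΔ⟩)
  have hmap : Set.MapsTo (fun x => δ⁻¹ * x * δ) S S := by
    rintro x ⟨hx, hxd⟩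
    obtain ⟨x', hx', he⟩ := gj_cycle_right 𝒢 hbal hx hxd
    have heq : δ⁻¹ * x * δ = x' := by rw [mul_assoc, he, ← mul_assoc, inv_mul_cancel, one_mul]
    show δ⁻¹ * x * δ ∈ S
    rw [heq]; exact hx'
  have hinj : Set.InjOn (fun x => δ⁻¹ * x * δ) S := by
    intro a _ b _ hab
    simp only at hab
    have := mul_right_cancel hab
    exact mul_left_cancel this
  have hbij := (hfin.injOn_iff_bijOn_of_mapsTo hmap).mp hinj
  obtain ⟨d₀, hd₀S, he⟩ := hbij.surjOn ⟨hd, hdvd⟩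
  refine ⟨d₀, hd₀S, ?_⟩
  simp only at he
  rw [← he, ← mul_assoc, ← mul_assoc, mul_inv_cancel, one_mul]

def PM (𝒢 : GarsideGroup G) (δ : G) : Submonoid G :=
  Submonoid.closure {g | g ∈ 𝒢.P ∧ PLDvd 𝒢.P g δ}

lemma gj_PM_mem_P {δ u : G} (h : u ∈ PM 𝒢 δ) : u ∈ 𝒢.P :=
  (Submonoid.closure_le.mpr (fun g hg => hg.1) : PM 𝒢 δ ≤ 𝒢.P) h

lemma gj_conj_left {δ : G} (hδP : δ ∈ 𝒢.P) (hbal : BalancedP 𝒢 δ)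
    (hδΔ : PLDvd 𝒢.P δ 𝒢.Δ) : ∀ u ∈ PM 𝒢 δ, δ * u * δ⁻¹ ∈ PM 𝒢 δ := by
  intro u hu
  induction hu using Submonoid.closure_induction with
  | mem x hx =>
    obtain ⟨d₀, hd₀, he⟩ := gj_cycle_left 𝒢 hδP hbal hδΔ hx.1 hx.2
    have heq : δ * x * δ⁻¹ = d₀ := by rw [he, mul_inv_cancel_right]
    rw [heq]; exact Submonoid.subset_closure hd₀
  | one => simpa using one_mem _
  | mul x y _ _ ihx ihy =>
    have heq : δ * (x * y) * δ⁻¹ = (δ * x * δ⁻¹) * (δ * y * δ⁻¹) := by group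
    rw [heq]; exact mul_mem ihx ihy

lemma gj_conj_pow_left {δ : G} (hδP : δ ∈ 𝒢.P) (hbal : BalancedP 𝒢 δ)
    (hδΔ : PLDvd 𝒢.P δ 𝒢.Δ) : ∀ (m : ℕ), ∀ u ∈ PM 𝒢 δ, δ ^ m * u * (δ ^ m)⁻¹ ∈ PM 𝒢 δ := by
  intro m
  induction m with
  | zero => intro u hu; simpa using hu
  | succ m ih =>
    intro u hu
    have heq : δ ^ (m+1) * u * (δ ^ (m+1))⁻¹ = δ * (δ ^ m * u * (δ ^ m)⁻¹) * δ⁻¹ := by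
      rw [pow_succ' δ m]; group
    rw [heq]
    exact gj_conj_left 𝒢 hδP hbal hδΔ _ (ih u hu)

lemma gj_dvd_mul_pow {δ : G} (hbal : BalancedP 𝒢 δ) :
    ∀ (n : ℕ), ∀ d ∈ 𝒢.P, PLDvd 𝒢.P d δ → PLDvd 𝒢.P (d * δ ^ n) (δ ^ (n + 1)) := by
  intro n
  induction n with
  | zero => intro d _ hdδ; simpa using hdδ
  | succ n ih =>
    intro d hd hdδ
    obtain ⟨d', hd', he⟩ := gj_cycle_right 𝒢 hbal hd hdδ
    have h1 : d * δ ^ (n + 1) = δ * (d' * δ ^ n) := by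
      rw [pow_succ' δ n, ← mul_assoc, he, mul_assoc]
    have h2 : δ ^ (n + 2) = δ * δ ^ (n + 1) := pow_succ' δ (n + 1)
    rw [h1, h2]
    exact gj_ldvd_mul_left 𝒢 δ (ih d' hd'.1 hd'.2)

lemma gj_pm_dvd_pow {δ : G} (hbal : BalancedP 𝒢 δ) {u : G} (hu : u ∈ PM 𝒢 δ) :
    ∃ k : ℕ, PLDvd 𝒢.P u (δ ^ k) := by
  obtain ⟨l, hl, rfl⟩ := Submonoid.exists_list_of_mem_closure hu
  clear hu
  induction l with
  | nil => exact ⟨0, by simpa using gj_ldvd_refl 𝒢 1⟩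
  | cons d l IH =>
    obtain ⟨k, hk⟩ := IH (fun y hy => hl y (List.mem_cons_of_mem d hy))
    refine ⟨k + 1, ?_⟩
    rw [List.prod_cons]
    exact gj_ldvd_trans 𝒢 (gj_ldvd_mul_left 𝒢 d hk)
      (gj_dvd_mul_pow 𝒢 hbal k d (hl d (List.mem_cons_self)).1 (hl d (List.mem_cons_self)).2)

end Block2

section Block3
variable (𝒢 : GarsideGroup G)

lemma gj_div_mem_G {δ : G} (hbal : BalancedP 𝒢 δ) :
    ∀ g ∈ 𝒢.P, PLDvd 𝒢.P g δ → g ∈ Gδ 𝒢 δ := by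
  apply gj_noeth_induction 𝒢 (fun g => PLDvd 𝒢.P g δ → g ∈ Gδ 𝒢 δ)
  intro g hg IH hgδ
  rcases eq_or_ne g 1 with rfl | hne
  · exact one_mem _
  obtain ⟨a, haat, hag⟩ := gj_exists_atom 𝒢 g hg hne
  have haδ : PLDvd 𝒢.P a δ := gj_ldvd_trans 𝒢 hag hgδ
  obtain ⟨c, hc, hgc⟩ := hag
  obtain ⟨e, heP, hge⟩ := hgδ
  have hceP : c * e ∈ 𝒢.P := mul_mem hc heP
  have hceR : PRDvd 𝒢.P (c * e) δ := ⟨a, haat.1, by rw [hge, hgc, mul_assoc]⟩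
  have hceL : PLDvd 𝒢.P (c * e) δ := (hbal _ hceP).mpr hceR
  have hcδ : PLDvd 𝒢.P c δ := gj_ldvd_trans 𝒢 (gj_ldvd_mul 𝒢 heP) hceL
  have hcG := IH c hc ⟨a, haat.1, haat.2.1, Or.inl hgc⟩ hcδ
  rw [hgc]
  exact mul_mem (Subgroup.subset_closure ⟨haat, haδ⟩) hcG

lemma gj_head {δ : G} (hpar : IsStdParabolic 𝒢 δ) {d t : G}
    (hd : d ∈ 𝒢.P ∧ PLDvd 𝒢.P d δ) (ht : t ∈ 𝒢.P ∧ PLDvd 𝒢.P t δ) :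
    PLDvd 𝒢.P (𝒢.wedgeL (d * t) 𝒢.Δ) δ := by
  obtain ⟨⟨hδP, hδΔ⟩, hbal, hset⟩ := hpar
  have hdtP : d * t ∈ 𝒢.P := mul_mem hd.1 ht.1
  set s := 𝒢.wedgeL (d * t) 𝒢.Δ with hs
  have hsP : s ∈ 𝒢.P := 𝒢.wedgeL_mem _ hdtP _ 𝒢.Δ_mem
  have hsΔ : PLDvd 𝒢.P s 𝒢.Δ := 𝒢.wedgeL_dvd_right _ hdtP _ 𝒢.Δ_mem
  have hds : PLDvd 𝒢.P d s :=
    𝒢.le_wedgeL _ hdtP _ 𝒢.Δ_mem d hd.1 (gj_ldvd_mul 𝒢 ht.1) (gj_ldvd_trans 𝒢 hd.2 hδΔ)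
  obtain ⟨v, hv, hsv⟩ := hds
  have hsdt : PLDvd 𝒢.P s (d * t) := 𝒢.wedgeL_dvd_left _ hdtP _ 𝒢.Δ_mem
  have hvt : PLDvd 𝒢.P v t := by
    apply gj_ldvd_cancel_left 𝒢 (c := d)
    rw [← hsv]; exact hsdt
  have hsG : s ∈ Gδ 𝒢 δ := by
    rw [hsv]
    exact mul_mem (gj_div_mem_G 𝒢 hbal d hd.1 hd.2)
      (gj_div_mem_G 𝒢 hbal v hv (gj_ldvd_trans 𝒢 hvt ht.2))
  have hmem : s ∈ DG 𝒢 ∩ ((Gδ 𝒢 δ : Set G) ∩ (𝒢.P : Set G)) := ⟨⟨hsP, hsΔ⟩, hsG, hsP⟩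
  rw [← hset] at hmem
  exact hmem.2

lemma gj_master {δ : G} (hpar : IsStdParabolic 𝒢 δ) :
    ∀ l : List G, (∀ y ∈ l, y ∈ 𝒢.P ∧ PLDvd 𝒢.P y δ) →
      ∀ w ∈ DG 𝒢, PLDvd 𝒢.P w l.prod →
        PLDvd 𝒢.P w δ ∧ w⁻¹ * l.prod ∈ PM 𝒢 δ := by
  have hδP : δ ∈ 𝒢.P := hpar.1.1
  have hδΔ : PLDvd 𝒢.P δ 𝒢.Δ := hpar.1.2
  intro l
  induction l with
  | nil =>
    intro _ w hw hwd
    simp only [List.prod_nil] at hwd ⊢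
    have hw1 : w = 1 := gj_ldvd_one 𝒢 hw.1 hwd
    subst hw1
    exact ⟨gj_one_ldvd 𝒢 hδP, by simpa using one_mem _⟩
  | cons d l IH =>
    intro hl w hw hwd
    have hd := hl d (List.mem_cons_self)
    have hlrest : ∀ y ∈ l, y ∈ 𝒢.P ∧ PLDvd 𝒢.P y δ :=
      fun y hy => hl y (List.mem_cons_of_mem d hy)
    have hxP : l.prod ∈ 𝒢.P := Submonoid.list_prod_mem _ (fun y hy => (hlrest y hy).1)
    rw [List.prod_cons] at hwd ⊢
    obtain ⟨hwP, hwΔ⟩ := hw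
    set v := 𝒢.veeL w d with hv
    have hvP : v ∈ 𝒢.P := 𝒢.veeL_mem w hwP d hd.1
    have hwv : PLDvd 𝒢.P w v := 𝒢.dvd_veeL_left w hwP d hd.1
    have hdv : PLDvd 𝒢.P d v := 𝒢.dvd_veeL_right w hwP d hd.1
    have hvdx : PLDvd 𝒢.P v (d * l.prod) :=
      𝒢.veeL_le w hwP d hd.1 _ (mul_mem hd.1 hxP) hwd (gj_ldvd_mul 𝒢 hxP)
    obtain ⟨t, htP, hvt⟩ := hdv
    have htx : PLDvd 𝒢.P t l.prod := by
      apply gj_ldvd_cancel_left 𝒢 (c := d)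
      rw [← hvt]; exact hvdx
    have hvΔ : PLDvd 𝒢.P v 𝒢.Δ :=
      𝒢.veeL_le w hwP d hd.1 _ 𝒢.Δ_mem hwΔ (gj_ldvd_trans 𝒢 hd.2 hδΔ)
    obtain ⟨q, hq, hvq⟩ := hvΔ
    have htqR : PRDvd 𝒢.P (t * q) 𝒢.Δ := ⟨d, hd.1, by rw [hvq, hvt, mul_assoc]⟩
    have htqL : PLDvd 𝒢.P (t * q) 𝒢.Δ := (𝒢.balanced _ (mul_mem htP hq)).mpr htqR
    have htΔ : PLDvd 𝒢.P t 𝒢.Δ := gj_ldvd_trans 𝒢 (gj_ldvd_mul 𝒢 hq) htqL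
    obtain ⟨htδ, htquot⟩ := IH hlrest t ⟨htP, htΔ⟩ htx
    -- first conclusion
    have hwdt : PLDvd 𝒢.P w (d * t) := by rw [← hvt]; exact hwv
    have hwle : PLDvd 𝒢.P w (𝒢.wedgeL (d * t) 𝒢.Δ) :=
      𝒢.le_wedgeL _ (mul_mem hd.1 htP) _ 𝒢.Δ_mem w hwP hwdt hwΔ
    have hwδ : PLDvd 𝒢.P w δ :=
      gj_ldvd_trans 𝒢 hwle (gj_head 𝒢 hpar hd ⟨htP, htδ⟩)
    refine ⟨hwδ, ?_⟩
    -- second conclusion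
    have hsP : w⁻¹ * v ∈ 𝒢.P := gj_quot_mem_left 𝒢 hwv
    have hseq : v = w * (w⁻¹ * v) := (mul_inv_cancel_left w v).symm
    have hsΔ : PLDvd 𝒢.P (w⁻¹ * v) 𝒢.Δ := by
      obtain ⟨q', hq', he'⟩ := hwv
      have hq'eq : w⁻¹ * v = q' := by rw [he', inv_mul_cancel_left]
      rw [hq'eq]
      have hR : PRDvd 𝒢.P (q' * q) 𝒢.Δ := ⟨w, hwP, by rw [hvq, he', mul_assoc]⟩
      have hL : PLDvd 𝒢.P (q' * q) 𝒢.Δ := (𝒢.balanced _ (mul_mem hq' hq)).mpr hR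
      exact gj_ldvd_trans 𝒢 (gj_ldvd_mul 𝒢 hq) hL
    have hsG : w⁻¹ * v ∈ Gδ 𝒢 δ := by
      have : w⁻¹ * v = w⁻¹ * (d * t) := by rw [← hvt]
      rw [this]
      exact mul_mem (inv_mem (gj_div_mem_G 𝒢 hpar.2.1 w hwP hwδ))
        (mul_mem (gj_div_mem_G 𝒢 hpar.2.1 d hd.1 hd.2)
          (gj_div_mem_G 𝒢 hpar.2.1 t htP htδ))
    have hsδ : PLDvd 𝒢.P (w⁻¹ * v) δ := by
      have hmem : w⁻¹ * v ∈ DG 𝒢 ∩ ((Gδ 𝒢 δ : Set G) ∩ (𝒢.P : Set G)) :=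
        ⟨⟨hsP, hsΔ⟩, hsG, hsP⟩
      rw [← hpar.2.2] at hmem
      exact hmem.2
    have heq : w⁻¹ * (d * l.prod) = (w⁻¹ * v) * (t⁻¹ * l.prod) := by
      rw [hvt]; group
    rw [heq]
    exact mul_mem (Submonoid.subset_closure ⟨hsP, hsδ⟩) htquot

lemma gj_quot {δ : G} (hpar : IsStdParabolic 𝒢 δ) {w x : G} (hw : w ∈ DG 𝒢)
    (hx : x ∈ PM 𝒢 δ) (hd : PLDvd 𝒢.P w x) :
    PLDvd 𝒢.P w δ ∧ w⁻¹ * x ∈ PM 𝒢 δ := by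
  obtain ⟨l, hl, rfl⟩ := Submonoid.exists_list_of_mem_closure hx
  exact gj_master 𝒢 hpar l hl w hw hd

lemma gj_quot_list {δ : G} (hpar : IsStdParabolic 𝒢 δ) :
    ∀ l : List G, (∀ y ∈ l, y ∈ 𝒢.P ∧ PLDvd 𝒢.P y δ) →
      ∀ x ∈ PM 𝒢 δ, PLDvd 𝒢.P l.prod x → (l.prod)⁻¹ * x ∈ PM 𝒢 δ := by
  intro l
  induction l with
  | nil => intro _ x hx _; simpa using hx
  | cons d l IH =>
    intro hl x hx hd
    rw [List.prod_cons] at hd ⊢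
    have hdd := hl d (List.mem_cons_self)
    have hlP : l.prod ∈ 𝒢.P :=
      Submonoid.list_prod_mem _ (fun y hy => (hl y (List.mem_cons_of_mem d hy)).1)
    have hdx : PLDvd 𝒢.P d x := gj_ldvd_trans 𝒢 (gj_ldvd_mul 𝒢 hlP) hd
    have hdDG : d ∈ DG 𝒢 := ⟨hdd.1, gj_ldvd_trans 𝒢 hdd.2 hpar.1.2⟩
    obtain ⟨-, hq⟩ := gj_quot 𝒢 hpar hdDG hx hdx
    have hlp : PLDvd 𝒢.P l.prod (d⁻¹ * x) := by
      obtain ⟨c, hc, he⟩ := hd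
      exact ⟨c, hc, by rw [he]; group⟩
    have hres := IH (fun y hy => hl y (List.mem_cons_of_mem d hy)) (d⁻¹ * x) hq hlp
    have heq : (d * l.prod)⁻¹ * x = (l.prod)⁻¹ * (d⁻¹ * x) := by group
    rw [heq]
    exact hres

lemma gj_quot' {δ : G} (hpar : IsStdParabolic 𝒢 δ) {u x : G} (hu : u ∈ PM 𝒢 δ)
    (hx : x ∈ PM 𝒢 δ) (hd : PLDvd 𝒢.P u x) : u⁻¹ * x ∈ PM 𝒢 δ := by
  obtain ⟨l, hl, rfl⟩ := Submonoid.exists_list_of_mem_closure hu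
  exact gj_quot_list 𝒢 hpar l hl x hx hd

lemma gj_dvd_mem_PM {δ : G} (hpar : IsStdParabolic 𝒢 δ) :
    ∀ g ∈ 𝒢.P, ∀ x ∈ PM 𝒢 δ, PLDvd 𝒢.P g x → g ∈ PM 𝒢 δ := by
  apply gj_noeth_induction 𝒢 (fun g => ∀ x ∈ PM 𝒢 δ, PLDvd 𝒢.P g x → g ∈ PM 𝒢 δ)
  intro g hg IH x hx hgx
  rcases eq_or_ne g 1 with rfl | hne
  · exact one_mem _
  obtain ⟨a, haat, hag⟩ := gj_exists_atom 𝒢 g hg hne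
  have haDG := gj_atom_mem_DG 𝒢 a haat
  have hax := gj_ldvd_trans 𝒢 hag hgx
  obtain ⟨haδ, haq⟩ := gj_quot 𝒢 hpar haDG hx hax
  obtain ⟨c, hc, hgc⟩ := hag
  have hcx : PLDvd 𝒢.P c (a⁻¹ * x) := by
    obtain ⟨e, he, hxe⟩ := hgx
    exact ⟨e, he, by rw [hxe, hgc]; group⟩
  have hcPM := IH c hc ⟨a, haat.1, haat.2.1, Or.inl hgc⟩ (a⁻¹ * x) haq hcx
  rw [hgc]
  exact mul_mem (Submonoid.subset_closure ⟨haat.1, haδ⟩) hcPM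

end Block3

section Block4
variable (𝒢 : GarsideGroup G)

lemma gj_self_mem_PM {δ : G} (hδP : δ ∈ 𝒢.P) : δ ∈ PM 𝒢 δ :=
  Submonoid.subset_closure
    (show δ ∈ {g | g ∈ 𝒢.P ∧ PLDvd 𝒢.P g δ} from ⟨hδP, gj_ldvd_refl 𝒢 δ⟩)

lemma gj_frac {δ : G} (hpar : IsStdParabolic 𝒢 δ) :
    ∀ g ∈ Gδ 𝒢 δ, ∃ (k : ℕ) (u : G), u ∈ PM 𝒢 δ ∧ g = (δ ^ k)⁻¹ * u := by
  have hδP : δ ∈ 𝒢.P := hpar.1.1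
  have hδΔ : PLDvd 𝒢.P δ 𝒢.Δ := hpar.1.2
  have hbal : BalancedP 𝒢 δ := hpar.2.1
  intro g hg
  induction hg using Subgroup.closure_induction with
  | mem s hs => exact ⟨0, s, Submonoid.subset_closure ⟨hs.1.1, hs.2⟩, by simp⟩
  | one => exact ⟨0, 1, one_mem _, by simp⟩
  | mul x y _ _ ihx ihy =>
    obtain ⟨k, u, hu, rfl⟩ := ihx
    obtain ⟨m, v, hv, rfl⟩ := ihy
    refine ⟨k + m, (δ ^ m * u * (δ ^ m)⁻¹) * v,
      mul_mem (gj_conj_pow_left 𝒢 hδP hbal hδΔ m u hu) hv, ?_⟩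
    have hsplit : δ ^ (k + m) = δ ^ m * δ ^ k := by rw [← pow_add, Nat.add_comm]
    rw [hsplit]; group
  | inv x _ ihx =>
    obtain ⟨k, u, hu, rfl⟩ := ihx
    obtain ⟨m, hm⟩ := gj_pm_dvd_pow 𝒢 hbal hu
    have hδPM : δ ^ m ∈ PM 𝒢 δ :=
      pow_mem (gj_self_mem_PM 𝒢 hδP) m
    have hδPM' : ∀ j : ℕ, δ ^ j ∈ PM 𝒢 δ :=
      fun j => pow_mem (gj_self_mem_PM 𝒢 hδP) j
    have hc : u⁻¹ * δ ^ m ∈ PM 𝒢 δ := gj_quot' 𝒢 hpar hu hδPM hm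
    rcases le_or_gt m k with hmk | hkm
    · refine ⟨0, (u⁻¹ * δ ^ m) * δ ^ (k - m), mul_mem hc (hδPM' (k - m)), ?_⟩
      have hsplit : δ ^ k = δ ^ m * δ ^ (k - m) := by rw [← pow_add]; congr 1; omega
      rw [pow_zero, hsplit]; group
    · refine ⟨m - k, δ ^ (m - k) * (u⁻¹ * δ ^ m) * (δ ^ (m - k))⁻¹,
        gj_conj_pow_left 𝒢 hδP hbal hδΔ (m - k) _ hc, ?_⟩
      have hsplit : δ ^ m = δ ^ k * δ ^ (m - k) := by rw [← pow_add]; congr 1; omega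
      rw [hsplit]; group

lemma gj_normal_pair {δ : G} (hpar : IsStdParabolic 𝒢 δ) (k : ℕ) {u : G}
    (hu : u ∈ PM 𝒢 δ) :
    ∃ p1 p2 : G, p1 ∈ PM 𝒢 δ ∧ p2 ∈ PM 𝒢 δ ∧ p1 ∈ 𝒢.P ∧ p2 ∈ 𝒢.P ∧
      (δ ^ k)⁻¹ * u = p1⁻¹ * p2 ∧ 𝒢.wedgeL p1 p2 = 1 := by
  have hδP : δ ∈ 𝒢.P := hpar.1.1
  have hδkP : δ ^ k ∈ 𝒢.P := pow_mem hδP k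
  have huP : u ∈ 𝒢.P := gj_PM_mem_P 𝒢 hu
  set w := 𝒢.wedgeL (δ ^ k) u with hw
  have hwP : w ∈ 𝒢.P := 𝒢.wedgeL_mem _ hδkP _ huP
  have hw1 : PLDvd 𝒢.P w (δ ^ k) := 𝒢.wedgeL_dvd_left _ hδkP _ huP
  have hw2 : PLDvd 𝒢.P w u := 𝒢.wedgeL_dvd_right _ hδkP _ huP
  have hδkPM : δ ^ k ∈ PM 𝒢 δ :=
    pow_mem (gj_self_mem_PM 𝒢 hδP) k
  have hwPM : w ∈ PM 𝒢 δ := gj_dvd_mem_PM 𝒢 hpar w hwP (δ ^ k) hδkPM hw1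
  have hp1 : w⁻¹ * δ ^ k ∈ PM 𝒢 δ := gj_quot' 𝒢 hpar hwPM hδkPM hw1
  have hp2 : w⁻¹ * u ∈ PM 𝒢 δ := gj_quot' 𝒢 hpar hwPM hu hw2
  refine ⟨w⁻¹ * δ ^ k, w⁻¹ * u, hp1, hp2, gj_quot_mem_left 𝒢 hw1, gj_quot_mem_left 𝒢 hw2,
    by group, ?_⟩
  exact gj_coprime 𝒢 hδkP huP hw (mul_inv_cancel_left w (δ ^ k)).symm
    (mul_inv_cancel_left w u).symm (gj_quot_mem_left 𝒢 hw1) (gj_quot_mem_left 𝒢 hw2)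

lemma gj_inter_sub {δ τ : G} (hparδ : IsStdParabolic 𝒢 δ) (hparτ : IsStdParabolic 𝒢 τ) :
    ∀ g ∈ 𝒢.P, g ∈ PM 𝒢 δ → g ∈ PM 𝒢 τ → g ∈ Gδ 𝒢 (𝒢.wedgeL δ τ) := by
  apply gj_noeth_induction 𝒢
    (fun g => g ∈ PM 𝒢 δ → g ∈ PM 𝒢 τ → g ∈ Gδ 𝒢 (𝒢.wedgeL δ τ))
  intro g hg IH hgδ hgτ
  rcases eq_or_ne g 1 with rfl | hne
  · exact one_mem _
  obtain ⟨a, haat, hag⟩ := gj_exists_atom 𝒢 g hg hne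
  have haDG := gj_atom_mem_DG 𝒢 a haat
  obtain ⟨haδ, haqδ⟩ := gj_quot 𝒢 hparδ haDG hgδ hag
  obtain ⟨haτ, haqτ⟩ := gj_quot 𝒢 hparτ haDG hgτ hag
  have haμ : PLDvd 𝒢.P a (𝒢.wedgeL δ τ) :=
    𝒢.le_wedgeL δ hparδ.1.1 τ hparτ.1.1 a haat.1 haδ haτ
  obtain ⟨c, hc, hgc⟩ := hag
  have hceq : c = a⁻¹ * g := by rw [hgc]; group
  have hcG := IH c hc ⟨a, haat.1, haat.2.1, Or.inl hgc⟩ (hceq ▸ haqδ) (hceq ▸ haqτ)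
  rw [hgc]
  exact mul_mem (Subgroup.subset_closure ⟨haat, haμ⟩) hcG

end Block4

theorem inter_parabolic_subgroups' (𝒢 : GarsideGroup G)
    (δ τ : G) (hδ : IsStdParabolic 𝒢 δ) (hτ : IsStdParabolic 𝒢 τ) :
    Gδ 𝒢 δ ⊓ Gδ 𝒢 τ = Gδ 𝒢 (𝒢.wedgeL δ τ) ∧ IsStdParabolic 𝒢 (𝒢.wedgeL δ τ) := by
  have hδP : δ ∈ 𝒢.P := hδ.1.1
  have hτP : τ ∈ 𝒢.P := hτ.1.1
  have hδΔ : PLDvd 𝒢.P δ 𝒢.Δ := hδ.1.2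
  have hbalδ : BalancedP 𝒢 δ := hδ.2.1
  have hbalτ : BalancedP 𝒢 τ := hτ.2.1
  set μ := 𝒢.wedgeL δ τ with hμ
  have hμP : μ ∈ 𝒢.P := 𝒢.wedgeL_mem δ hδP τ hτP
  have hμδ : PLDvd 𝒢.P μ δ := 𝒢.wedgeL_dvd_left δ hδP τ hτP
  have hμτ : PLDvd 𝒢.P μ τ := 𝒢.wedgeL_dvd_right δ hδP τ hτP
  have hμΔ : PLDvd 𝒢.P μ 𝒢.Δ := gj_ldvd_trans 𝒢 hμδ hδΔ
  -- part 1
  have h1 : Gδ 𝒢 δ ⊓ Gδ 𝒢 τ = Gδ 𝒢 μ := by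
    apply le_antisymm
    · intro g hgm
      obtain ⟨hg1, hg2⟩ := Subgroup.mem_inf.mp hgm
      obtain ⟨k, u, hu, hgu⟩ := gj_frac 𝒢 hδ g hg1
      obtain ⟨m, v, hv, hgv⟩ := gj_frac 𝒢 hτ g hg2
      obtain ⟨p1, p2, hp1δ, hp2δ, hp1P, hp2P, hpe, hpc⟩ := gj_normal_pair 𝒢 hδ k hu
      obtain ⟨q1, q2, hq1τ, hq2τ, hq1P, hq2P, hqe, hqc⟩ := gj_normal_pair 𝒢 hτ m hv
      obtain ⟨p, -, hup⟩ := 𝒢.normal_form g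
      have e1 : (p1, p2) = p := hup (p1, p2) ⟨hp1P, hp2P, by rw [hgu, hpe], hpc⟩
      have e2 : (q1, q2) = p := hup (q1, q2) ⟨hq1P, hq2P, by rw [hgv, hqe], hqc⟩
      have epq : (p1, p2) = (q1, q2) := e1.trans e2.symm
      have ep1 : p1 = q1 := congrArg Prod.fst epq
      have ep2 : p2 = q2 := congrArg Prod.snd epq
      have hp1τ : p1 ∈ PM 𝒢 τ := ep1 ▸ hq1τ
      have hp2τ : p2 ∈ PM 𝒢 τ := ep2 ▸ hq2τ
      have hg1G : p1 ∈ Gδ 𝒢 μ := gj_inter_sub 𝒢 hδ hτ p1 hp1P hp1δ hp1τ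
      have hg2G : p2 ∈ Gδ 𝒢 μ := gj_inter_sub 𝒢 hδ hτ p2 hp2P hp2δ hp2τ
      rw [hgu, hpe]
      exact mul_mem (inv_mem hg1G) hg2G
    · apply le_inf
      · apply Subgroup.closure_mono
        intro s hs
        exact ⟨hs.1, gj_ldvd_trans 𝒢 hs.2 hμδ⟩
      · apply Subgroup.closure_mono
        intro s hs
        exact ⟨hs.1, gj_ldvd_trans 𝒢 hs.2 hμτ⟩
  refine ⟨h1, ?_⟩
  -- μ is also the right gcd
  have hW : 𝒢.wedgeR δ τ = μ := by
    set W := 𝒢.wedgeR δ τ with hWdef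
    have hWP : W ∈ 𝒢.P := 𝒢.wedgeR_mem δ hδP τ hτP
    have hWδ : PLDvd 𝒢.P W δ := (hbalδ W hWP).mpr (𝒢.wedgeR_dvd_left δ hδP τ hτP)
    have hWτ : PLDvd 𝒢.P W τ := (hbalτ W hWP).mpr (𝒢.wedgeR_dvd_right δ hδP τ hτP)
    have hWμ : PLDvd 𝒢.P W μ := 𝒢.le_wedgeL δ hδP τ hτP W hWP hWδ hWτ
    have hμW : PRDvd 𝒢.P μ W :=
      𝒢.le_wedgeR δ hδP τ hτP μ hμP ((hbalδ μ hμP).mp hμδ) ((hbalτ μ hμP).mp hμτ)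
    obtain ⟨e, he, hμe⟩ := hWμ
    obtain ⟨c, hc, hWc⟩ := hμW
    have hμs : μ = c * μ * e := by rw [← hWc, ← hμe]
    obtain ⟨hc1, he1⟩ := gj_sandwich 𝒢 hμP hc he hμs
    rw [hWc, hc1, one_mul]
  -- balanced
  have hbalμ : BalancedP 𝒢 μ := by
    intro g hg
    constructor
    · intro hgμ
      have hgδ : PRDvd 𝒢.P g δ := (hbalδ g hg).mp (gj_ldvd_trans 𝒢 hgμ hμδ)
      have hgτ : PRDvd 𝒢.P g τ := (hbalτ g hg).mp (gj_ldvd_trans 𝒢 hgμ hμτ)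
      have := 𝒢.le_wedgeR δ hδP τ hτP g hg hgδ hgτ
      rwa [hW] at this
    · intro hgμ
      have hWδ : PRDvd 𝒢.P μ δ := by rw [← hW]; exact 𝒢.wedgeR_dvd_left δ hδP τ hτP
      have hWτ : PRDvd 𝒢.P μ τ := by rw [← hW]; exact 𝒢.wedgeR_dvd_right δ hδP τ hτP
      have hgδ : PLDvd 𝒢.P g δ := (hbalδ g hg).mpr (gj_rdvd_trans 𝒢 hgμ hWδ)
      have hgτ : PLDvd 𝒢.P g τ := (hbalτ g hg).mpr (gj_rdvd_trans 𝒢 hgμ hWτ)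
      exact 𝒢.le_wedgeL δ hδP τ hτP g hg hgδ hgτ
  refine ⟨⟨hμP, hμΔ⟩, hbalμ, ?_⟩
  -- set equality
  ext g
  constructor
  · rintro ⟨hgP, hgμ⟩
    have hgδ : PLDvd 𝒢.P g δ := gj_ldvd_trans 𝒢 hgμ hμδ
    have hgτ : PLDvd 𝒢.P g τ := gj_ldvd_trans 𝒢 hgμ hμτ
    have hmemδ : g ∈ {g | g ∈ 𝒢.P ∧ PLDvd 𝒢.P g δ} := ⟨hgP, hgδ⟩
    rw [hδ.2.2] at hmemδ
    have hmemτ : g ∈ {g | g ∈ 𝒢.P ∧ PLDvd 𝒢.P g τ} := ⟨hgP, hgτ⟩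
    rw [hτ.2.2] at hmemτ
    have hgμG : g ∈ Gδ 𝒢 μ := by
      rw [← h1]
      exact Subgroup.mem_inf.mpr ⟨hmemδ.2.1, hmemτ.2.1⟩
    exact ⟨hmemδ.1, hgμG, hgP⟩
  · rintro ⟨hgDG, hgG, hgP⟩
    have hgm : g ∈ Gδ 𝒢 δ ⊓ Gδ 𝒢 τ := by rw [h1]; exact hgG
    obtain ⟨hgd, hgt⟩ := Subgroup.mem_inf.mp hgm
    have hgδ : PLDvd 𝒢.P g δ := by
      have h' : g ∈ DG 𝒢 ∩ ((Gδ 𝒢 δ : Set G) ∩ (𝒢.P : Set G)) := ⟨hgDG, hgd, hgP⟩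
      rw [← hδ.2.2] at h'
      exact h'.2
    have hgτ : PLDvd 𝒢.P g τ := by
      have h' : g ∈ DG 𝒢 ∩ ((Gδ 𝒢 τ : Set G) ∩ (𝒢.P : Set G)) := ⟨hgDG, hgt, hgP⟩
      rw [← hτ.2.2] at h'
      exact h'.2
    exact ⟨hgP, 𝒢.le_wedgeL δ hδP τ hτP g hgP hgδ hgτ⟩

theorem inter_parabolic_subgroups {G : Type*} [Group G] (𝒢 : GarsideGroup G)
    (δ τ : G) (hδ : IsStdParabolic 𝒢 δ) (hτ : IsStdParabolic 𝒢 τ) :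
    Gδ 𝒢 δ ⊓ Gδ 𝒢 τ = Gδ 𝒢 (𝒢.wedgeL δ τ) ∧ IsStdParabolic 𝒢 (𝒢.wedgeL δ τ) :=
  inter_parabolic_subgroups' 𝒢 δ τ hδ hτ
end Garside
end

section
/- Let G be the group with presentation ⟨x, y, z ∣ x² = y², xz = zx, yz = zy⟩ and let G⁺ be the submonoid generated by {x, y, z}. Then the subgroup generated by {x, z} intersected with the subgroup generated by {y, z} equals the subgroup generated by {x², z}. -/
/-!
Since `x` and `z` commute, every element of `⟨x, z⟩` is `x ^ m * z ^ n`. The homomorphism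
`G → ℤ/2` sending `x ↦ 1`, `y, z ↦ 0` respects the relations and kills `⟨y, z⟩`, so on the
intersection `m` is even and the element lies in `⟨x², z⟩`. Conversely `x² = y²` lies in both
subgroups.
-/

namespace Garside

/-- The relations x² = y², xz = zx, yz = zy on generators x = 0, y = 1, z = 2. -/
def exampleRels : Set (FreeGroup (Fin 3)) :=
  { FreeGroup.of 0 * FreeGroup.of 0 * (FreeGroup.of 1 * FreeGroup.of 1)⁻¹,
    FreeGroup.of 0 * FreeGroup.of 2 * (FreeGroup.of 2 * FreeGroup.of 0)⁻¹,
    FreeGroup.of 1 * FreeGroup.of 2 * (FreeGroup.of 2 * FreeGroup.of 1)⁻¹ }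

end Garside

namespace Subgroup

variable {G : Type*} [Group G] {a b : G}

theorem exists_zpow_mul_zpow_of_mem_closure_pair (hab : Commute a b) {g : G}
    (hg : g ∈ closure {a, b}) : ∃ m n : ℤ, a ^ m * b ^ n = g := by
  induction hg using closure_induction with
  | mem g hg =>
    rcases hg with rfl | rfl
    · exact ⟨1, 0, by simp⟩
    · exact ⟨0, 1, by simp⟩
  | one => exact ⟨0, 0, by simp⟩
  | mul g h _ _ hg hh =>
    obtain ⟨m, n, rfl⟩ := hg
    obtain ⟨m', n', rfl⟩ := hh
    refine ⟨m + m', n + n', ?_⟩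
    rw [zpow_add, zpow_add, mul_assoc, mul_assoc, ← mul_assoc (b ^ n),
      ((hab.zpow_zpow m' n).symm).eq, mul_assoc]
  | inv g _ hg =>
    obtain ⟨m, n, rfl⟩ := hg
    refine ⟨-m, -n, ?_⟩
    rw [mul_inv_rev, zpow_neg, zpow_neg, (hab.zpow_zpow m n).inv_inv.eq]

theorem closure_sq_le_closure : closure {a ^ 2, b} ≤ closure {a, b} :=
  closure_le _ |>.2 <| Set.pair_subset
    (pow_mem (subset_closure (Set.mem_insert a _)) 2)
    (subset_closure (Set.mem_insert_of_mem a (Set.mem_singleton b)))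

theorem zpow_mul_zpow_mem_closure_sq {m : ℤ} (hm : Even m) (n : ℤ) :
    a ^ m * b ^ n ∈ closure {a ^ 2, b} := by
  obtain ⟨k, rfl⟩ := hm
  rw [← two_mul, zpow_mul, zpow_two, ← sq]
  exact mul_mem (zpow_mem (subset_closure (Set.mem_insert _ _)) k)
    (zpow_mem (subset_closure (Set.mem_insert_of_mem _ (Set.mem_singleton b))) n)

end Subgroup

namespace Garside

open PresentedGroup Subgroup

theorem of_zero_sq_eq_of_one_sq : (of 0 : PresentedGroup exampleRels) ^ 2 = of 1 ^ 2 := by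
  have h := mk_eq_mk_of_mul_inv_mem (rels := exampleRels) (Or.inl rfl)
  rw [map_mul, map_mul] at h
  rw [sq, sq]
  exact h

theorem commute_of_zero_of_two : Commute (of 0 : PresentedGroup exampleRels) (of 2) := by
  have h := mk_eq_mk_of_mul_inv_mem (rels := exampleRels) (Or.inr (Or.inl rfl))
  rw [map_mul, map_mul] at h
  exact h

def parityOfX : PresentedGroup exampleRels →* Multiplicative (ZMod 2) :=
  toGroup (f := fun i ↦ .ofAdd (if i = 0 then 1 else 0)) <| by
    rintro r (rfl | rfl | rfl) <;> simp; decide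

theorem closure_of_one_of_two_le_ker_parityOfX :
    closure {of 1, of 2} ≤ parityOfX.ker :=
  closure_le _ |>.2 <| by
    rintro w (rfl | rfl) <;> simp [parityOfX, toGroup.of]

theorem parityOfX_zpow_mul_zpow (m n : ℤ) :
    parityOfX (of 0 ^ m * of 2 ^ n) = .ofAdd (m : ZMod 2) := by
  simp [parityOfX, toGroup.of, ← ofAdd_zsmul]

theorem example_intersection :
    Subgroup.closure ({PresentedGroup.of 0, PresentedGroup.of 2} :
        Set (PresentedGroup exampleRels)) ⊓
      Subgroup.closure {PresentedGroup.of 1, PresentedGroup.of 2} =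
    Subgroup.closure {PresentedGroup.of 0 ^ 2, PresentedGroup.of 2} := by
  refine le_antisymm ?_ (le_inf closure_sq_le_closure ?_)
  · rintro g ⟨hxz, hyz⟩
    obtain ⟨m, n, rfl⟩ := exists_zpow_mul_zpow_of_mem_closure_pair commute_of_zero_of_two hxz
    have hm : (m : ZMod 2) = 0 := by
      simpa [parityOfX_zpow_mul_zpow] using closure_of_one_of_two_le_ker_parityOfX hyz
    exact zpow_mul_zpow_mem_closure_sq (ZMod.intCast_eq_zero_iff_even.1 hm) n
  · rw [of_zero_sq_eq_of_one_sq]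
    exact closure_sq_le_closure

end Garside
end
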